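/- arXiv:1009.3556 — 10 statements merged into one kernel-verified Lean document; each statement's English description precedes it below -/
import Mathlib

section
/- The value function V* of the perpetual δ-penalty call option is non-decreasing in the initial asset price and Lipschitz continuous with Lipschitz constant 1: for all 0 < x ≤ y one has 0 ≤ V*(y) − V*(x) ≤ y − x. -/
open MeasureTheory ProbabilityTheory
open scoped NNReal ENNReal

noncomputable section

/-- A stopping time with values in `ℝ≥0∞` with respect to a filtration indexed by `ℝ≥0`. -/
def IsStoppingTimeE {Ω : Type*} {m : MeasurableSpace Ω} (ℱ : Filtration ℝ≥0 m)
    (τ : Ω → ℝ≥0∞) : Prop :=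
  ∀ t : ℝ≥0, MeasurableSet[ℱ t] {ω | τ ω ≤ (t : ℝ≥0∞)}

/-- `W` is a standard one-dimensional Brownian motion with respect to the filtration `ℱ`
and the probability measure `P`. -/
structure IsStandardBrownian {Ω : Type*} {m : MeasurableSpace Ω} (ℱ : Filtration ℝ≥0 m)
    (P : Measure Ω) (W : ℝ≥0 → Ω → ℝ) : Prop where
  adapted : Adapted ℱ W
  init : ∀ᵐ ω ∂P, W 0 ω = 0
  cont : ∀ᵐ ω ∂P, Continuous fun t : ℝ≥0 => W t ω
  indep_incr : ∀ s t : ℝ≥0, s ≤ t →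
    Indep (MeasurableSpace.comap (fun ω => W t ω - W s ω) (borel ℝ)) (ℱ s) P
  gauss_incr : ∀ s t : ℝ≥0, s ≤ t →
    P.map (fun ω => W t ω - W s ω) = gaussianReal 0 (t - s)

/-- The exponential process `N_t = exp((r - d - σ²/2) t + σ W_t)`. -/
def assetN {Ω : Type*} (r d σ : ℝ) (W : ℝ≥0 → Ω → ℝ) (t : ℝ≥0) (ω : Ω) : ℝ :=
  Real.exp ((r - d - σ ^ 2 / 2) * (t : ℝ) + σ * W t ω)

/-- The discounted payoff to the holder of the δ-penalty call when the holder exercises at `ρ`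
and the writer cancels at `τ`, with the convention that the payoff is `0` on `{ρ = τ = ∞}`. -/
def gamePayoff {Ω : Type*} (r d σ K δ : ℝ) (W : ℝ≥0 → Ω → ℝ) (x : ℝ)
    (ρ τ : Ω → ℝ≥0∞) (ω : Ω) : ℝ :=
  if ρ ω = ⊤ ∧ τ ω = ⊤ then 0
  else
    Real.exp (-r * (min (ρ ω) (τ ω)).toReal) *
      (if τ ω < ρ ω then max (x * assetN r d σ W (τ ω).toNNReal ω - K) 0 + δ
       else max (x * assetN r d σ W (ρ ω).toNNReal ω - K) 0)

/-- The expected discounted payoff `J^x(ρ, τ)`. -/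
def gameJ {Ω : Type*} {m : MeasurableSpace Ω} (P : Measure Ω) (r d σ K δ : ℝ)
    (W : ℝ≥0 → Ω → ℝ) (x : ℝ) (ρ τ : Ω → ℝ≥0∞) : ℝ :=
  ∫ ω, gamePayoff r d σ K δ W x ρ τ ω ∂P

/-- The value `V*(x) = inf_τ sup_ρ J^x(ρ, τ)` of the perpetual δ-penalty call option. -/
def gameValue {Ω : Type*} {m : MeasurableSpace Ω} (ℱ : Filtration ℝ≥0 m) (P : Measure Ω)
    (r d σ K δ : ℝ) (W : ℝ≥0 → Ω → ℝ) (x : ℝ) : ℝ :=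
  ⨅ τ : {τ : Ω → ℝ≥0∞ // IsStoppingTimeE ℱ τ},
    ⨆ ρ : {ρ : Ω → ℝ≥0∞ // IsStoppingTimeE ℱ ρ},
      gameJ P r d σ K δ W x ρ.1 τ.1

/-!
Write `Z_t = e^{-rt} N_t = exp (-(d + σ²/2) t + σ W_t)` and `Z_∞ = 0`. The call payoff `(· - K)⁺`
is monotone and 1-Lipschitz, so pointwise `payoff^x ≤ payoff^y ≤ payoff^x + (y - x) Z_{ρ∧τ}`.
Since `d ≥ 0`, `Z` is a positive supermartingale; optional stopping on dyadic time grids, followed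
by Fatou's lemma and continuity of the paths, gives `E[Z_{ρ∧τ}] ≤ Z_0 = 1`. Hence
`J^x ≤ J^y ≤ J^x + (y - x)` for all stopping times `ρ`, `τ`, and these inequalities pass through
`inf_τ sup_ρ` because every `J^x(ρ, τ)` lies in `[0, x + δ]`.
-/

open Real Filter Topology

section InfSup

variable {ι κ : Type*} {f g : ι → κ → ℝ} {B c : ℝ}

lemma ciInf_ciSup_mono (hf : ∀ i k, 0 ≤ f i k) (hg : ∀ i k, g i k ≤ B)
    (hfg : ∀ i k, f i k ≤ g i k) : ⨅ i, ⨆ k, f i k ≤ ⨅ i, ⨆ k, g i k :=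
  ciInf_mono ⟨0, Set.forall_mem_range.2 fun i => Real.iSup_nonneg (hf i)⟩ fun i =>
    ciSup_mono ⟨B, Set.forall_mem_range.2 (hg i)⟩ (hfg i)

lemma ciInf_ciSup_le_add [Nonempty ι] [Nonempty κ] (hg : ∀ i k, 0 ≤ g i k) (hf : ∀ i k, f i k ≤ B)
    (hgf : ∀ i k, g i k ≤ f i k + c) : ⨅ i, ⨆ k, g i k ≤ (⨅ i, ⨆ k, f i k) + c := by
  rw [← sub_le_iff_le_add]
  refine le_ciInf fun i => sub_le_iff_le_add.2 ?_
  calc ⨅ i, ⨆ k, g i k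
      ≤ ⨆ k, g i k := ciInf_le ⟨0, Set.forall_mem_range.2 fun i => Real.iSup_nonneg (hg i)⟩ i
    _ ≤ (⨆ k, f i k) + c := ciSup_le fun k =>
        (hgf i k).trans (add_le_add_left (le_ciSup ⟨B, Set.forall_mem_range.2 (hf i)⟩ k) c)

end InfSup

section Dyadic

def dyadic (n k : ℕ) : ℝ≥0 := k / 2 ^ n

lemma dyadic_mono (n : ℕ) : Monotone (dyadic n) := fun _ _ h =>
  div_le_div_of_nonneg_right (by exact_mod_cast h) (by positivity)

@[simp]
lemma dyadic_zero (n : ℕ) : dyadic n 0 = 0 := by simp [dyadic]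

lemma dyadic_mul_two_pow (n k : ℕ) : dyadic n (k * 2 ^ n) = k := by
  simp [dyadic]

lemma tendsto_dyadic_ceil (a : ℝ≥0) :
    Tendsto (fun n => dyadic n ⌈a * 2 ^ n⌉₊) atTop (𝓝 a) := by
  have h2 : ∀ n : ℕ, (0 : ℝ≥0) < 2 ^ n := fun n => by positivity
  have lower : ∀ n, a ≤ dyadic n ⌈a * 2 ^ n⌉₊ := fun n =>
    (le_div_iff₀ (h2 n)).2 (Nat.le_ceil _)
  have upper : ∀ n, dyadic n ⌈a * 2 ^ n⌉₊ ≤ a + 2⁻¹ ^ n := fun n => by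
    rw [dyadic, div_le_iff₀ (h2 n), add_mul, inv_pow, inv_mul_cancel₀ (h2 n).ne']
    exact (Nat.ceil_lt_add_one zero_le).le
  refine tendsto_of_tendsto_of_tendsto_of_le_of_le tendsto_const_nhds ?_ lower upper
  simpa using tendsto_const_nhds.add
    (NNReal.tendsto_pow_atTop_nhds_zero_of_lt_one (r := 2⁻¹) (by norm_num))

def dyadicFiltration {Ω : Type*} {m : MeasurableSpace Ω} (ℱ : Filtration ℝ≥0 m) (n : ℕ) :
    Filtration ℕ m where
  seq k := ℱ (dyadic n k)
  mono' _ _ h := ℱ.mono (dyadic_mono n h)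
  le' _ := ℱ.le _

end Dyadic

section StoppingTimes

variable {Ω : Type*} {m : MeasurableSpace Ω} {ℱ : Filtration ℝ≥0 m} {η ρ τ : Ω → ℝ≥0∞}

lemma IsStoppingTimeE.measurable (hη : IsStoppingTimeE ℱ η) : Measurable η := by
  refine measurable_of_Iic fun a => ?_
  rcases eq_or_ne a ⊤ with rfl | ha
  · simp
  · have : η ⁻¹' Set.Iic a = {ω | η ω ≤ (a.toNNReal : ℝ≥0∞)} := by
      simp [Set.preimage, ENNReal.coe_toNNReal ha]
    exact this ▸ ℱ.le _ _ (hη a.toNNReal)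

lemma IsStoppingTimeE.min (hρ : IsStoppingTimeE ℱ ρ) (hτ : IsStoppingTimeE ℱ τ) :
    IsStoppingTimeE ℱ fun ω => min (ρ ω) (τ ω) := fun t => by
  simpa only [min_le_iff, Set.ofPred_or] using (hρ t).union (hτ t)

/-- Truncating at time `n` makes this a bounded stopping time of the grid filtration, as discrete
optional stopping requires. -/
def dyadicIndex (η : Ω → ℝ≥0∞) (n : ℕ) (ω : Ω) : ℕ := ⌈(min (η ω) n).toNNReal * 2 ^ n⌉₊

lemma dyadicIndex_le_iff {n k : ℕ} {ω : Ω} :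
    dyadicIndex η n ω ≤ k ↔ η ω ≤ dyadic n k ∨ (n : ℝ≥0∞) ≤ dyadic n k := by
  have hmin : min (η ω) n ≠ ⊤ := (min_le_right _ _).trans_lt (ENNReal.natCast_lt_top n) |>.ne
  rw [dyadicIndex, Nat.ceil_le, ← le_div_iff₀ (by positivity), ← min_le_iff,
    ← ENNReal.toNNReal_le_toNNReal hmin ENNReal.coe_ne_top, ENNReal.toNNReal_coe]
  rfl

lemma dyadicIndex_le (n : ℕ) (ω : Ω) : dyadicIndex η n ω ≤ n * 2 ^ n :=
  dyadicIndex_le_iff.2 (Or.inr (by rw [dyadic_mul_two_pow]; rfl))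

lemma IsStoppingTimeE.isStoppingTime_dyadicIndex (hη : IsStoppingTimeE ℱ η) (n : ℕ) :
    IsStoppingTime (dyadicFiltration ℱ n) fun ω => (dyadicIndex η n ω : WithTop ℕ) := fun k => by
  have : {ω | (dyadicIndex η n ω : WithTop ℕ) ≤ k} =
      {ω | η ω ≤ dyadic n k} ∪ {_ω | (n : ℝ≥0∞) ≤ dyadic n k} := by
    ext ω
    simp [dyadicIndex_le_iff]
  exact this ▸ (hη _).union (MeasurableSet.const _)

lemma tendsto_dyadic_dyadicIndex {ω : Ω} (hω : η ω ≠ ⊤) :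
    Tendsto (fun n => dyadic n (dyadicIndex η n ω)) atTop (𝓝 (η ω).toNNReal) := by
  refine (tendsto_dyadic_ceil _).congr' ?_
  filter_upwards [eventually_ge_atTop ⌈(η ω).toNNReal⌉₊] with n hn
  have : η ω ≤ n := by
    rw [← ENNReal.coe_toNNReal hω]
    exact_mod_cast Nat.ceil_le.1 hn
  simp [dyadicIndex, min_eq_left this]

end StoppingTimes

section RandomTime

variable {Ω : Type*} {m : MeasurableSpace Ω} {P : Measure Ω}

lemma aemeasurable_comp_randomTime {X : ℝ≥0 → Ω → ℝ} (hX : ∀ t, Measurable (X t))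
    (hcont : ∀ᵐ ω ∂P, Continuous fun t => X t ω) {q : Ω → ℝ≥0} (hq : Measurable q) :
    AEMeasurable (fun ω => X (q ω) ω) P := by
  have hceil : ∀ n : ℕ, Measurable fun ω => ⌈q ω * 2 ^ n⌉₊ := fun n =>
    (Nat.ceil_mono (R := ℝ≥0)).measurable.comp (hq.mul_const _)
  have happrox : ∀ n : ℕ, Measurable fun ω => X (dyadic n ⌈q ω * 2 ^ n⌉₊) ω := fun n => by
    have h1 : Measurable fun p : Ω × ℕ => X (dyadic n p.2) p.1 :=
      measurable_from_prod_countable_left fun k => hX (dyadic n k)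
    exact (h1.comp (measurable_id.prodMk (hceil n)) :)
  refine aemeasurable_of_tendsto_metrizable_ae atTop (fun n => (happrox n).aemeasurable) ?_
  filter_upwards [hcont] with ω hω
  exact (hω.tendsto (q ω)).comp (tendsto_dyadic_ceil (q ω))

end RandomTime

section DiscountedAsset

variable {Ω : Type*} {m : MeasurableSpace Ω} {ℱ : Filtration ℝ≥0 m} {P : Measure Ω}
  {W : ℝ≥0 → Ω → ℝ}

/-- The discounted asset price `e^{-rt} N_t`, which does not depend on `r`. -/
def discountedAsset (d σ : ℝ) (W : ℝ≥0 → Ω → ℝ) (t : ℝ≥0) (ω : Ω) : ℝ :=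
  rexp (-(d + σ ^ 2 / 2) * t + σ * W t ω)

lemma exp_mul_assetN (r d σ : ℝ) (t : ℝ≥0) (ω : Ω) :
    rexp (-r * t) * assetN r d σ W t ω = discountedAsset d σ W t ω := by
  rw [assetN, discountedAsset, ← Real.exp_add]
  ring_nf

lemma discountedAsset_eq_mul (d σ : ℝ) {s t : ℝ≥0} (hst : s ≤ t) (ω : Ω) :
    discountedAsset d σ W t ω = discountedAsset d σ W s ω *
      (rexp (-(d + σ ^ 2 / 2) * (t - s : ℝ≥0)) * rexp (σ * (W t ω - W s ω))) := by
  simp only [discountedAsset, ← Real.exp_add, NNReal.coe_sub hst]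
  ring_nf

namespace IsStandardBrownian

lemma measurable (hW : IsStandardBrownian ℱ P W) (t : ℝ≥0) : Measurable (W t) :=
  (hW.adapted t).mono (ℱ.le t) le_rfl

lemma integral_exp_mul_sub (hW : IsStandardBrownian ℱ P W) {s t : ℝ≥0} (hst : s ≤ t) (c : ℝ) :
    ∫ ω, rexp (c * (W t ω - W s ω)) ∂P = rexp ((t - s : ℝ≥0) * c ^ 2 / 2) := by
  simpa [mgf] using mgf_gaussianReal (hW.gauss_incr s t hst) c

lemma integrable_exp_mul_sub [IsProbabilityMeasure P] (hW : IsStandardBrownian ℱ P W)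
    {s t : ℝ≥0} (hst : s ≤ t) (c : ℝ) : Integrable (fun ω => rexp (c * (W t ω - W s ω))) P :=
  mgf_pos_iff.1 (by rw [mgf_gaussianReal (hW.gauss_incr s t hst)]; positivity)

lemma condExp_exp_mul_sub [IsProbabilityMeasure P] (hW : IsStandardBrownian ℱ P W) {s t : ℝ≥0}
    (hst : s ≤ t) (a c : ℝ) :
    P[fun ω => rexp a * rexp (c * (W t ω - W s ω)) | ℱ s]
      =ᵐ[P] fun _ => rexp a * rexp ((t - s : ℝ≥0) * c ^ 2 / 2) := by
  have hincr : Measurable[MeasurableSpace.comap (fun ω => W t ω - W s ω) (borel ℝ)]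
      fun ω => W t ω - W s ω := comap_measurable _
  refine (condExp_indep_eq ((hW.measurable t).sub (hW.measurable s)).comap_le (ℱ.le s)
    ((hincr.const_mul c).exp.const_mul _).stronglyMeasurable (hW.indep_incr s t hst)).trans ?_
  simp [integral_const_mul, hW.integral_exp_mul_sub hst]

end IsStandardBrownian

lemma stronglyMeasurable_discountedAsset (hW : IsStandardBrownian ℱ P W) (d σ : ℝ) (t : ℝ≥0) :
    StronglyMeasurable[ℱ t] (discountedAsset d σ W t) :=
  (measurable_const.add ((hW.adapted t).const_mul σ)).exp.stronglyMeasurable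

lemma integrable_discountedAsset [IsProbabilityMeasure P] (hW : IsStandardBrownian ℱ P W)
    (d σ : ℝ) (t : ℝ≥0) : Integrable (discountedAsset d σ W t) P := by
  refine ((hW.integrable_exp_mul_sub (zero_le : 0 ≤ t) σ).const_mul
    (rexp (-(d + σ ^ 2 / 2) * t))).congr ?_
  filter_upwards [hW.init] with ω hω
  simp [discountedAsset, hω, Real.exp_add]

lemma condExp_discountedAsset_le [IsProbabilityMeasure P] (hW : IsStandardBrownian ℱ P W)
    {d : ℝ} (hd : 0 ≤ d) (σ : ℝ) {s t : ℝ≥0} (hst : s ≤ t) :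
    P[discountedAsset d σ W t | ℱ s] ≤ᵐ[P] discountedAsset d σ W s := by
  obtain ⟨a, ha⟩ : ∃ a, a = -(d + σ ^ 2 / 2) * (t - s : ℝ≥0) := ⟨_, rfl⟩
  have hfactor : discountedAsset d σ W t = discountedAsset d σ W s *
      fun ω => rexp a * rexp (σ * (W t ω - W s ω)) :=
    funext fun ω => ha ▸ discountedAsset_eq_mul d σ hst ω
  have hmul := condExp_mul_of_stronglyMeasurable_left (m := ℱ s) (μ := P)
    (stronglyMeasurable_discountedAsset hW d σ s)
    (hfactor ▸ integrable_discountedAsset hW d σ t) ((hW.integrable_exp_mul_sub hst σ).const_mul _)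
  have hdecay : rexp a * rexp ((t - s : ℝ≥0) * σ ^ 2 / 2) ≤ 1 := by
    rw [← Real.exp_add, Real.exp_le_one_iff, ha]
    nlinarith [mul_nonneg hd (t - s : ℝ≥0).coe_nonneg]
  rw [hfactor]
  filter_upwards [hmul, hW.condExp_exp_mul_sub hst a σ] with ω h1 h2
  rw [h1, Pi.mul_apply, h2]
  exact mul_le_of_le_one_right (Real.exp_pos _).le hdecay

lemma ae_continuous_discountedAsset (hW : IsStandardBrownian ℱ P W) (d σ : ℝ) :
    ∀ᵐ ω ∂P, Continuous fun t => discountedAsset d σ W t ω := by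
  filter_upwards [hW.cont] with ω hω
  unfold discountedAsset
  fun_prop

end DiscountedAsset

section OptionalStopping

variable {Ω : Type*} {m : MeasurableSpace Ω} {ℱ : Filtration ℝ≥0 m} {P : Measure Ω}
  [IsProbabilityMeasure P] {W : ℝ≥0 → Ω → ℝ} {d : ℝ} {η : Ω → ℝ≥0∞}

lemma supermartingale_discountedAsset_dyadic (hW : IsStandardBrownian ℱ P W) (hd : 0 ≤ d)
    (σ : ℝ) (n : ℕ) :
    Supermartingale (fun k => discountedAsset d σ W (dyadic n k)) (dyadicFiltration ℱ n) P :=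
  ⟨fun _ => stronglyMeasurable_discountedAsset hW d σ _,
    fun _ _ hij => condExp_discountedAsset_le hW hd σ (dyadic_mono n hij),
    fun _ => integrable_discountedAsset hW d σ _⟩

lemma integral_discountedAsset_zero (hW : IsStandardBrownian ℱ P W) (d σ : ℝ) :
    ∫ ω, discountedAsset d σ W 0 ω ∂P = 1 := by
  rw [integral_congr_ae (g := fun _ => (1 : ℝ)) ?_, integral_const, probReal_univ, smul_eq_mul,
    one_mul]
  filter_upwards [hW.init] with ω hω
  simp [discountedAsset, hω]

lemma integrable_discountedAsset_dyadicIndex (hW : IsStandardBrownian ℱ P W) (σ : ℝ)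
    (hη : IsStoppingTimeE ℱ η) (n : ℕ) :
    Integrable (fun ω => discountedAsset d σ W (dyadic n (dyadicIndex η n ω)) ω) P :=
  integrable_stoppedValue ℕ (hη.isStoppingTime_dyadicIndex n)
    (fun _ => integrable_discountedAsset hW d σ _)
    (fun ω => WithTop.coe_le_coe.2 (dyadicIndex_le n ω))

lemma integral_discountedAsset_dyadicIndex_le_one (hW : IsStandardBrownian ℱ P W) (hd : 0 ≤ d)
    (σ : ℝ) (hη : IsStoppingTimeE ℱ η) (n : ℕ) :
    ∫ ω, discountedAsset d σ W (dyadic n (dyadicIndex η n ω)) ω ∂P ≤ 1 := by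
  have h := (supermartingale_discountedAsset_dyadic hW hd σ n).neg.expected_stoppedValue_mono
    (isStoppingTime_const _ 0) (hη.isStoppingTime_dyadicIndex n)
    (fun _ => WithTop.coe_le_coe.2 (Nat.zero_le _))
    (fun ω => WithTop.coe_le_coe.2 (dyadicIndex_le n ω))
  simp only [stoppedValue, Pi.neg_apply, integral_neg, neg_le_neg_iff] at h
  change _ ≤ ∫ ω, discountedAsset d σ W (dyadic n 0) ω ∂P at h
  rwa [dyadic_zero, integral_discountedAsset_zero hW] at h

end OptionalStopping

section StoppedDiscountedAsset

variable {Ω : Type*} {m : MeasurableSpace Ω} {ℱ : Filtration ℝ≥0 m} {P : Measure Ω}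
  {W : ℝ≥0 → Ω → ℝ} {d σ : ℝ} {η : Ω → ℝ≥0∞}

def discountedAssetAt (d σ : ℝ) (W : ℝ≥0 → Ω → ℝ) (η : Ω → ℝ≥0∞) : Ω → ℝ :=
  {ω | η ω ≠ ⊤}.indicator fun ω => discountedAsset d σ W (η ω).toNNReal ω

lemma discountedAssetAt_nonneg (ω : Ω) : 0 ≤ discountedAssetAt d σ W η ω :=
  Set.indicator_nonneg (fun _ _ => (Real.exp_pos _).le) ω

lemma aemeasurable_discountedAssetAt (hW : IsStandardBrownian ℱ P W) (hη : Measurable η) :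
    AEMeasurable (discountedAssetAt d σ W η) P :=
  (aemeasurable_comp_randomTime
    (fun t => ((stronglyMeasurable_discountedAsset hW d σ t).mono (ℱ.le t)).measurable)
    (ae_continuous_discountedAsset hW d σ) hη.ennreal_toNNReal).indicator
    (hη (measurableSet_singleton ⊤)).compl

lemma lintegral_discountedAssetAt_le_one [IsProbabilityMeasure P] (hW : IsStandardBrownian ℱ P W)
    (hd : 0 ≤ d) (hη : IsStoppingTimeE ℱ η) :
    ∫⁻ ω, ENNReal.ofReal (discountedAssetAt d σ W η ω) ∂P ≤ 1 := by
  set approx : ℕ → Ω → ℝ≥0∞ := fun n ω =>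
    ENNReal.ofReal (discountedAsset d σ W (dyadic n (dyadicIndex η n ω)) ω)
  have hfatou : ∀ᵐ ω ∂P, ENNReal.ofReal (discountedAssetAt d σ W η ω) ≤
      atTop.liminf fun n => approx n ω := by
    filter_upwards [ae_continuous_discountedAsset hW d σ] with ω hω
    by_cases hηω : η ω = ⊤
    · simp [discountedAssetAt, hηω]
    · rw [discountedAssetAt, Set.indicator_of_mem hηω]
      exact (((ENNReal.continuous_ofReal.comp hω).tendsto _).comp
        (tendsto_dyadic_dyadicIndex hηω)).liminf_eq.ge
  calc ∫⁻ ω, ENNReal.ofReal (discountedAssetAt d σ W η ω) ∂P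
      ≤ ∫⁻ ω, atTop.liminf (fun n => approx n ω) ∂P := lintegral_mono_ae hfatou
    _ ≤ atTop.liminf fun n => ∫⁻ ω, approx n ω ∂P := lintegral_liminf_le' fun n =>
        (integrable_discountedAsset_dyadicIndex hW σ hη n).aemeasurable.ennreal_ofReal
    _ ≤ 1 := by
        refine liminf_le_of_frequently_le' (Frequently.of_forall fun n => ?_)
        rw [← ofReal_integral_eq_lintegral_ofReal
          (integrable_discountedAsset_dyadicIndex hW σ hη n)
          (ae_of_all _ fun _ => (Real.exp_pos _).le)]
        exact ENNReal.ofReal_le_one.2 (integral_discountedAsset_dyadicIndex_le_one hW hd σ hη n)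

lemma integrable_discountedAssetAt [IsProbabilityMeasure P] (hW : IsStandardBrownian ℱ P W)
    (hd : 0 ≤ d) (hη : IsStoppingTimeE ℱ η) : Integrable (discountedAssetAt d σ W η) P := by
  refine ⟨(aemeasurable_discountedAssetAt hW hη.measurable).aestronglyMeasurable, ?_⟩
  rw [hasFiniteIntegral_iff_ofReal (ae_of_all _ discountedAssetAt_nonneg)]
  exact (lintegral_discountedAssetAt_le_one hW hd hη).trans_lt ENNReal.one_lt_top

lemma integral_discountedAssetAt_le_one [IsProbabilityMeasure P] (hW : IsStandardBrownian ℱ P W)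
    (hd : 0 ≤ d) (hη : IsStoppingTimeE ℱ η) : ∫ ω, discountedAssetAt d σ W η ω ∂P ≤ 1 := by
  rw [integral_eq_lintegral_of_nonneg_ae (ae_of_all _ discountedAssetAt_nonneg)
    (aemeasurable_discountedAssetAt hW hη.measurable).aestronglyMeasurable]
  exact ENNReal.toReal_le_of_le_ofReal zero_le_one
    ((lintegral_discountedAssetAt_le_one hW hd hη).trans_eq ENNReal.ofReal_one.symm)

end StoppedDiscountedAsset

section Payoff

variable {Ω : Type*} {m : MeasurableSpace Ω} {ℱ : Filtration ℝ≥0 m} {P : Measure Ω}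
  {W : ℝ≥0 → Ω → ℝ} {r d σ K δ x y : ℝ} {ρ τ : Ω → ℝ≥0∞}

lemma gamePayoff_eq : gamePayoff r d σ K δ W x ρ τ =
    {ω | min (ρ ω) (τ ω) ≠ ⊤}.indicator fun ω => rexp (-r * (min (ρ ω) (τ ω)).toReal) *
      (max (x * assetN r d σ W (min (ρ ω) (τ ω)).toNNReal ω - K) 0 +
        {ω | τ ω < ρ ω}.indicator (fun _ => δ) ω) := by
  funext ω
  by_cases h : τ ω < ρ ω
  · simp [gamePayoff, h, min_eq_right h.le, h.ne_top]
  · rw [not_lt] at h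
    by_cases hρ : ρ ω = ⊤
    · simp [gamePayoff, hρ, top_le_iff.1 (hρ ▸ h)]
    · simp [gamePayoff, hρ, min_eq_left h, not_lt.2 h]

lemma exp_mul_assetN_eq_discountedAssetAt {ω : Ω} (h : min (ρ ω) (τ ω) ≠ ⊤) :
    rexp (-r * (min (ρ ω) (τ ω)).toReal) * assetN r d σ W (min (ρ ω) (τ ω)).toNNReal ω =
      discountedAssetAt d σ W (fun ω => min (ρ ω) (τ ω)) ω := by
  rw [discountedAssetAt, Set.indicator_of_mem h, ← exp_mul_assetN r,
    ENNReal.coe_toNNReal_eq_toReal]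

lemma gamePayoff_nonneg (hδ : 0 ≤ δ) (ω : Ω) : 0 ≤ gamePayoff r d σ K δ W x ρ τ ω := by
  unfold gamePayoff
  split_ifs <;> positivity

lemma gamePayoff_mono (hxy : x ≤ y) (ω : Ω) :
    gamePayoff r d σ K δ W x ρ τ ω ≤ gamePayoff r d σ K δ W y ρ τ ω := by
  unfold gamePayoff
  split_ifs
  · rfl
  all_goals
    gcongr
    exact (Real.exp_pos _).le

lemma max_mul_sub_le {A : ℝ} (hA : 0 ≤ A) (hxy : x ≤ y) (K : ℝ) :
    max (y * A - K) 0 ≤ max (x * A - K) 0 + (y - x) * A := by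
  have : 0 ≤ (y - x) * A := mul_nonneg (sub_nonneg.2 hxy) hA
  exact max_le (by linarith [le_max_left (x * A - K) 0]) (by linarith [le_max_right (x * A - K) 0])

lemma gamePayoff_le_add (hxy : x ≤ y) (ω : Ω) :
    gamePayoff r d σ K δ W y ρ τ ω ≤ gamePayoff r d σ K δ W x ρ τ ω +
      (y - x) * discountedAssetAt d σ W (fun ω => min (ρ ω) (τ ω)) ω := by
  rw [gamePayoff_eq, gamePayoff_eq]
  by_cases hm : min (ρ ω) (τ ω) = ⊤
  · have hω : ω ∉ {ω | min (ρ ω) (τ ω) ≠ ⊤} := not_not.2 hm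
    simp only [discountedAssetAt, Set.indicator_of_notMem hω, mul_zero, add_zero, le_refl]
  have hω : ω ∈ {ω | min (ρ ω) (τ ω) ≠ ⊤} := hm
  rw [Set.indicator_of_mem hω, Set.indicator_of_mem hω, ← exp_mul_assetN_eq_discountedAssetAt hm]
  have hA : 0 ≤ assetN r d σ W (min (ρ ω) (τ ω)).toNNReal ω := (Real.exp_pos _).le
  have he : 0 ≤ rexp (-r * (min (ρ ω) (τ ω)).toReal) := (Real.exp_pos _).le
  nlinarith [mul_le_mul_of_nonneg_left (max_mul_sub_le hA hxy K) he]

lemma gamePayoff_le (hr : 0 ≤ r) (hK : 0 ≤ K) (hδ : 0 ≤ δ) (hx : 0 ≤ x) (ω : Ω) :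
    gamePayoff r d σ K δ W x ρ τ ω ≤
      x * discountedAssetAt d σ W (fun ω => min (ρ ω) (τ ω)) ω + δ := by
  rw [gamePayoff_eq]
  by_cases hm : min (ρ ω) (τ ω) = ⊤
  · have hω : ω ∉ {ω | min (ρ ω) (τ ω) ≠ ⊤} := not_not.2 hm
    simpa only [discountedAssetAt, Set.indicator_of_notMem hω, mul_zero, zero_add] using hδ
  have hω : ω ∈ {ω | min (ρ ω) (τ ω) ≠ ⊤} := hm
  rw [Set.indicator_of_mem hω, ← exp_mul_assetN_eq_discountedAssetAt hm]
  set e := rexp (-r * (min (ρ ω) (τ ω)).toReal)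
  set A := assetN r d σ W (min (ρ ω) (τ ω)).toNNReal ω
  have he0 : 0 ≤ e := (Real.exp_pos _).le
  have he : e ≤ 1 :=
    Real.exp_le_one_iff.2 (by nlinarith [ENNReal.toReal_nonneg (a := min (ρ ω) (τ ω))])
  have hcall : max (x * A - K) 0 ≤ x * A :=
    max_le (by linarith) (mul_nonneg hx (Real.exp_pos _).le)
  have hpenalty : {ω | τ ω < ρ ω}.indicator (fun _ => δ) ω ≤ δ :=
    Set.indicator_le_self' (fun _ _ => hδ) ω
  have hpenalty' : 0 ≤ {ω | τ ω < ρ ω}.indicator (fun _ => δ) ω :=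
    Set.indicator_nonneg (fun _ _ => hδ) ω
  nlinarith [mul_le_mul_of_nonneg_left hcall he0, mul_le_of_le_one_left hpenalty' he]

end Payoff

section ExpectedPayoff

variable {Ω : Type*} {m : MeasurableSpace Ω} {ℱ : Filtration ℝ≥0 m} {P : Measure Ω}
  {W : ℝ≥0 → Ω → ℝ} {r d σ K δ x y : ℝ} {ρ τ : Ω → ℝ≥0∞}

lemma aestronglyMeasurable_gamePayoff (hW : IsStandardBrownian ℱ P W) (hρ : Measurable ρ)
    (hτ : Measurable τ) : AEStronglyMeasurable (gamePayoff r d σ K δ W x ρ τ) P := by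
  have hmin : Measurable fun ω => min (ρ ω) (τ ω) := hρ.min hτ
  have hasset : AEMeasurable (fun ω => assetN r d σ W (min (ρ ω) (τ ω)).toNNReal ω) P := by
    refine aemeasurable_comp_randomTime (fun t => ?_) ?_ hmin.ennreal_toNNReal
    · exact (measurable_const.add ((hW.measurable t).const_mul σ)).exp
    · filter_upwards [hW.cont] with ω hω
      unfold assetN
      fun_prop
  rw [gamePayoff_eq]
  refine (AEMeasurable.indicator ?_ (hmin (measurableSet_singleton ⊤)).compl).aestronglyMeasurable
  exact ((ENNReal.measurable_toReal.comp hmin).const_mul _).exp.aemeasurable.mul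
    ((((hasset.const_mul x).sub_const K).max aemeasurable_const).add
      (measurable_const.indicator (measurableSet_lt hτ hρ)).aemeasurable)

lemma gameJ_nonneg (hδ : 0 ≤ δ) : 0 ≤ gameJ P r d σ K δ W x ρ τ :=
  integral_nonneg (gamePayoff_nonneg hδ)

variable [IsProbabilityMeasure P]

lemma integrable_gamePayoff (hW : IsStandardBrownian ℱ P W) (hd : 0 ≤ d)
    (hρ : IsStoppingTimeE ℱ ρ) (hτ : IsStoppingTimeE ℱ τ) (hr : 0 ≤ r) (hK : 0 ≤ K)
    (hδ : 0 ≤ δ) (hx : 0 ≤ x) : Integrable (gamePayoff r d σ K δ W x ρ τ) P := by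
  have hD := integrable_discountedAssetAt (σ := σ) hW hd (hρ.min hτ)
  refine ((hD.const_mul x).add (integrable_const δ)).mono'
    (aestronglyMeasurable_gamePayoff hW hρ.measurable hτ.measurable) (ae_of_all _ fun ω => ?_)
  rw [Real.norm_of_nonneg (gamePayoff_nonneg hδ ω)]
  exact gamePayoff_le hr hK hδ hx ω

lemma gameJ_mono (hW : IsStandardBrownian ℱ P W) (hd : 0 ≤ d) (hρ : IsStoppingTimeE ℱ ρ)
    (hτ : IsStoppingTimeE ℱ τ) (hr : 0 ≤ r) (hK : 0 ≤ K) (hδ : 0 ≤ δ) (hx : 0 ≤ x)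
    (hxy : x ≤ y) : gameJ P r d σ K δ W x ρ τ ≤ gameJ P r d σ K δ W y ρ τ :=
  integral_mono (integrable_gamePayoff hW hd hρ hτ hr hK hδ hx)
    (integrable_gamePayoff hW hd hρ hτ hr hK hδ (hx.trans hxy)) (gamePayoff_mono hxy)

lemma gameJ_le_add (hW : IsStandardBrownian ℱ P W) (hd : 0 ≤ d) (hρ : IsStoppingTimeE ℱ ρ)
    (hτ : IsStoppingTimeE ℱ τ) (hr : 0 ≤ r) (hK : 0 ≤ K) (hδ : 0 ≤ δ) (hx : 0 ≤ x)
    (hxy : x ≤ y) : gameJ P r d σ K δ W y ρ τ ≤ gameJ P r d σ K δ W x ρ τ + (y - x) := by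
  have hD := integrable_discountedAssetAt (σ := σ) hW hd (hρ.min hτ)
  have hJx := integrable_gamePayoff (σ := σ) (K := K) hW hd hρ hτ hr hK hδ hx
  calc gameJ P r d σ K δ W y ρ τ
      ≤ ∫ ω, gamePayoff r d σ K δ W x ρ τ ω +
          (y - x) * discountedAssetAt d σ W (fun ω => min (ρ ω) (τ ω)) ω ∂P :=
        integral_mono (integrable_gamePayoff hW hd hρ hτ hr hK hδ (hx.trans hxy))
          (hJx.add (hD.const_mul _)) (gamePayoff_le_add hxy)
    _ = gameJ P r d σ K δ W x ρ τ +
          (y - x) * ∫ ω, discountedAssetAt d σ W (fun ω => min (ρ ω) (τ ω)) ω ∂P := by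
        rw [integral_add hJx (hD.const_mul _), integral_const_mul, gameJ]
    _ ≤ gameJ P r d σ K δ W x ρ τ + (y - x) := by
        gcongr
        exact mul_le_of_le_one_right (sub_nonneg.2 hxy)
          (integral_discountedAssetAt_le_one hW hd (hρ.min hτ))

lemma gameJ_le (hW : IsStandardBrownian ℱ P W) (hd : 0 ≤ d) (hρ : IsStoppingTimeE ℱ ρ)
    (hτ : IsStoppingTimeE ℱ τ) (hr : 0 ≤ r) (hK : 0 ≤ K) (hδ : 0 ≤ δ) (hx : 0 ≤ x) :
    gameJ P r d σ K δ W x ρ τ ≤ x + δ := by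
  have hD := integrable_discountedAssetAt (σ := σ) hW hd (hρ.min hτ)
  calc gameJ P r d σ K δ W x ρ τ
      ≤ ∫ ω, x * discountedAssetAt d σ W (fun ω => min (ρ ω) (τ ω)) ω + δ ∂P :=
        integral_mono (integrable_gamePayoff hW hd hρ hτ hr hK hδ hx)
          ((hD.const_mul x).add (integrable_const δ)) (gamePayoff_le hr hK hδ hx)
    _ = x * ∫ ω, discountedAssetAt d σ W (fun ω => min (ρ ω) (τ ω)) ω ∂P + δ := by
        rw [integral_add (hD.const_mul x) (integrable_const δ), integral_const_mul,
          integral_const, probReal_univ, one_smul]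
    _ ≤ x + δ := by
        gcongr
        exact mul_le_of_le_one_right hx (integral_discountedAssetAt_le_one hW hd (hρ.min hτ))

end ExpectedPayoff

theorem gameValue_monotone_lipschitz_general {Ω : Type*} {m : MeasurableSpace Ω}
    (ℱ : Filtration ℝ≥0 m) (P : Measure Ω) [IsProbabilityMeasure P] (W : ℝ≥0 → Ω → ℝ)
    (hW : IsStandardBrownian ℱ P W) (r d σ K δ : ℝ)
    (hr : 0 < r) (hd : 0 ≤ d) (hK : 0 < K) (hδ : 0 < δ)
    (x y : ℝ) (hx : 0 < x) (hxy : x ≤ y) :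
    0 ≤ gameValue ℱ P r d σ K δ W y - gameValue ℱ P r d σ K δ W x ∧
      gameValue ℱ P r d σ K δ W y - gameValue ℱ P r d σ K δ W x ≤ y - x := by
  have : Nonempty {τ : Ω → ℝ≥0∞ // IsStoppingTimeE ℱ τ} := ⟨⟨fun _ => ⊤, fun _ => by simp⟩⟩
  have hy : 0 ≤ y := hx.le.trans hxy
  constructor
  · refine sub_nonneg.2 (ciInf_ciSup_mono (B := y + δ) (fun _ _ => gameJ_nonneg hδ.le)
      (fun τ ρ => gameJ_le hW hd ρ.2 τ.2 hr.le hK.le hδ.le hy) fun τ ρ => ?_)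
    exact gameJ_mono hW hd ρ.2 τ.2 hr.le hK.le hδ.le hx.le hxy
  · refine sub_le_iff_le_add'.2 (ciInf_ciSup_le_add (B := x + δ)
      (fun _ _ => gameJ_nonneg hδ.le) (fun τ ρ => gameJ_le hW hd ρ.2 τ.2 hr.le hK.le hδ.le hx.le)
      fun τ ρ => ?_)
    exact gameJ_le_add hW hd ρ.2 τ.2 hr.le hK.le hδ.le hx.le hxy

/-- The value function of the perpetual δ-penalty call option is non-decreasing in the initial
asset price and Lipschitz continuous with Lipschitz constant 1. -/
theorem gameValue_monotone_lipschitz {Ω : Type*} {m : MeasurableSpace Ω}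
    (ℱ : Filtration ℝ≥0 m) (P : Measure Ω) [IsProbabilityMeasure P] (W : ℝ≥0 → Ω → ℝ)
    (hW : IsStandardBrownian ℱ P W) (r d σ K δ : ℝ)
    (hr : 0 < r) (hd : 0 ≤ d) (hσ : 0 < σ) (hK : 0 < K) (hδ : 0 < δ)
    (x y : ℝ) (hx : 0 < x) (hxy : x ≤ y) :
    0 ≤ gameValue ℱ P r d σ K δ W y - gameValue ℱ P r d σ K δ W x ∧
      gameValue ℱ P r d σ K δ W y - gameValue ℱ P r d σ K δ W x ≤ y - x :=
  gameValue_monotone_lipschitz_general ℱ P W hW r d σ K δ hr hd hK hδ x y hx hxy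

end
end

section
/- Suppose r > d > 0. Any pair (h*, k*) with K < h* < k* solving the smooth-fit system (opt-hk) satisfies h* < r(K − δ)/d and k* > (r/d)·K. -/
/-!
For a solution `u` of the Euler equation `x² u'' + m x u' = q u`, with `m = 2(r - d)/σ²` and
`q = 2r/σ²`, the quantity `G(x) = (u(x) - u'(x)(x - L)) x^m` has derivative
`x^(m-2) u(x) ((m - q) x + q L)`, and `(m - q) x + q L = 2(rL - dx)/σ²`.
Since `x^m = 1/S'(x)`, the two smooth-fit equations prescribe `G(h)` for `u = φ̂_k`, `L = K - δ`,
and `G(k)` for `u = ψ̂_h`, `L = K`. Both functions are nonnegative on `[h, k]` and vanish at the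
other endpoint, where `G` is explicit; comparing, `G(h) < G(k)` in the first case and
`G(k) < G(h)` in the second. If `d h ≥ r (K - δ)` (resp. `d k ≤ r K`), `G'` would have the
wrong sign on all of `[h, k]`.
-/

noncomputable section

open Set

namespace SmoothFit

def scaledTangent (m L : ℝ) (u u' : ℝ → ℝ) (x : ℝ) : ℝ := (u x - u' x * (x - L)) * x ^ m

/-- `φ̂_k = rpowSub ν η (k ^ ν / k ^ η)` and `ψ̂_h = rpowSub η ν (h ^ η / h ^ ν)`. -/
def rpowSub (p s c x : ℝ) : ℝ := x ^ p - c * x ^ s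

def rpowSubDeriv (p s c x : ℝ) : ℝ := p * x ^ (p - 1) - c * (s * x ^ (s - 1))

variable {m q p s c L x : ℝ}

theorem hasDerivAt_scaledTangent {u u' : ℝ → ℝ} {u'' : ℝ} (hx : 0 < x)
    (hu : HasDerivAt u (u' x) x) (hu' : HasDerivAt u' u'' x)
    (hode : x ^ 2 * u'' + m * x * u' x = q * u x) :
    HasDerivAt (scaledTangent m L u u') (x ^ (m - 2) * u x * ((m - q) * x + q * L)) x := by
  refine ((hu.sub (hu'.mul ((hasDerivAt_id x).sub_const L))).mul
    (Real.hasDerivAt_rpow_const (p := m) (Or.inl hx.ne'))).congr_deriv ?_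
  rw [Real.rpow_sub hx, Real.rpow_sub hx, Real.rpow_one, Real.rpow_two]
  simp only [Pi.sub_apply, Pi.mul_apply, id]
  field_simp
  linear_combination (L - x) * hode

theorem hasDerivAt_rpowSub (hx : x ≠ 0) :
    HasDerivAt (rpowSub p s c) (rpowSubDeriv p s c x) x :=
  (Real.hasDerivAt_rpow_const (Or.inl hx)).sub
    ((Real.hasDerivAt_rpow_const (Or.inl hx)).const_mul c)

theorem hasDerivAt_rpowSubDeriv (hx : x ≠ 0) :
    HasDerivAt (rpowSubDeriv p s c)
      (p * ((p - 1) * x ^ (p - 1 - 1)) - c * (s * ((s - 1) * x ^ (s - 1 - 1)))) x :=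
  ((Real.hasDerivAt_rpow_const (Or.inl hx)).const_mul p).sub
    (((Real.hasDerivAt_rpow_const (Or.inl hx)).const_mul s).const_mul c)

theorem rpowSub_ode (hp : p * (p + m - 1) = q) (hs : s * (s + m - 1) = q) (hx : 0 < x) :
    x ^ 2 * (p * ((p - 1) * x ^ (p - 1 - 1)) - c * (s * ((s - 1) * x ^ (s - 1 - 1))))
      + m * x * rpowSubDeriv p s c x = q * rpowSub p s c x := by
  simp only [rpowSubDeriv, rpowSub, Real.rpow_sub_one hx.ne']
  field_simp
  linear_combination x ^ p * hp - c * x ^ s * hs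

theorem hasDerivAt_scaledTangent_rpowSub (hp : p * (p + m - 1) = q)
    (hs : s * (s + m - 1) = q) (hx : 0 < x) :
    HasDerivAt (scaledTangent m L (rpowSub p s c) (rpowSubDeriv p s c))
      (x ^ (m - 2) * rpowSub p s c x * ((m - q) * x + q * L)) x :=
  hasDerivAt_scaledTangent hx (hasDerivAt_rpowSub hx.ne') (hasDerivAt_rpowSubDeriv hx.ne')
    (rpowSub_ode hp hs hx)

theorem scaledTangent_rpowSub_monotoneOn (hp : p * (p + m - 1) = q)
    (hs : s * (s + m - 1) = q) {a b : ℝ} (ha : 0 < a)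
    (hsign : ∀ x ∈ Icc a b, 0 ≤ rpowSub p s c x * ((m - q) * x + q * L)) :
    MonotoneOn (scaledTangent m L (rpowSub p s c) (rpowSubDeriv p s c)) (Icc a b) := by
  have hG (x) (hx : x ∈ Icc a b) := hasDerivAt_scaledTangent_rpowSub (L := L) (c := c) hp hs
    (ha.trans_le hx.1)
  refine monotoneOn_of_hasDerivWithinAt_nonneg (convex_Icc a b)
    (fun x hx => (hG x hx).continuousAt.continuousWithinAt)
    (fun x hx => (hG x (interior_subset hx)).hasDerivWithinAt) fun x hx => ?_
  have hx := interior_subset hx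
  rw [mul_assoc]
  exact mul_nonneg (Real.rpow_pos_of_pos (ha.trans_le hx.1) _).le (hsign x hx)

theorem scaledTangent_rpowSub_antitoneOn (hp : p * (p + m - 1) = q)
    (hs : s * (s + m - 1) = q) {a b : ℝ} (ha : 0 < a)
    (hsign : ∀ x ∈ Icc a b, rpowSub p s c x * ((m - q) * x + q * L) ≤ 0) :
    AntitoneOn (scaledTangent m L (rpowSub p s c) (rpowSubDeriv p s c)) (Icc a b) := by
  have hG (x) (hx : x ∈ Icc a b) := hasDerivAt_scaledTangent_rpowSub (L := L) (c := c) hp hs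
    (ha.trans_le hx.1)
  refine antitoneOn_of_hasDerivWithinAt_nonpos (convex_Icc a b)
    (fun x hx => (hG x hx).continuousAt.continuousWithinAt)
    (fun x hx => (hG x (interior_subset hx)).hasDerivWithinAt) fun x hx => ?_
  have hx := interior_subset hx
  rw [mul_assoc]
  exact mul_nonpos_of_nonneg_of_nonpos (Real.rpow_pos_of_pos (ha.trans_le hx.1) _).le
    (hsign x hx)

theorem rpowSub_div_rpow_eq {z : ℝ} (hx : 0 < x) (hz : 0 < z) :
    rpowSub p s (z ^ p / z ^ s) x = x ^ s * (x ^ (p - s) - z ^ (p - s)) := by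
  rw [rpowSub, Real.rpow_sub hx, Real.rpow_sub hz]
  field_simp

theorem rpowSub_div_rpow_nonneg_of_le {z : ℝ} (hps : p < s) (hx : 0 < x) (hxz : x ≤ z) :
    0 ≤ rpowSub p s (z ^ p / z ^ s) x := by
  rw [rpowSub_div_rpow_eq hx (hx.trans_le hxz)]
  exact mul_nonneg (Real.rpow_pos_of_pos hx s).le
    (sub_nonneg.2 (Real.rpow_le_rpow_of_nonpos hx hxz (by linarith)))

theorem rpowSub_div_rpow_nonneg_of_ge {z : ℝ} (hsp : s < p) (hz : 0 < z) (hzx : z ≤ x) :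
    0 ≤ rpowSub p s (z ^ p / z ^ s) x := by
  rw [rpowSub_div_rpow_eq (hz.trans_le hzx) hz]
  exact mul_nonneg (Real.rpow_pos_of_pos (hz.trans_le hzx) s).le
    (sub_nonneg.2 (Real.rpow_le_rpow hz.le hzx (by linarith)))

theorem scaledTangent_rpowSub_div_rpow_self (hp : p * (p + m - 1) = q)
    (hs : s * (s + m - 1) = q) (hps : p ≠ s) {z : ℝ} (hz : 0 < z) :
    scaledTangent m L (rpowSub p s (z ^ p / z ^ s)) (rpowSubDeriv p s (z ^ p / z ^ s)) z
      = (s - p) * (z - L) / z ^ s := by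
  have hm : m = 1 - p - s := by
    have := mul_left_cancel₀ (sub_ne_zero.2 hps)
      (show (p - s) * (p + s + m - 1) = (p - s) * 0 by linear_combination hp - hs)
    linarith
  simp only [scaledTangent, rpowSub, rpowSubDeriv, hm, Real.rpow_sub hz, Real.rpow_one]
  field_simp
  ring

theorem div_rpow_neg_eq_scaledTangent {u u' : ℝ → ℝ} (hx : 0 < x) (hu : HasDerivAt u (u' x) x) :
    u x / x ^ (-m) - deriv u x / x ^ (-m) * (x - L) = scaledTangent m L u u' x := by
  rw [hu.deriv, Real.rpow_neg hx.le, scaledTangent]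
  field_simp

theorem sub_mul_lt_mul_of_smoothFit_left (hp : p * (p + m - 1) = q)
    (hs : s * (s + m - 1) = q) (hps : p < s) (hmq : m ≤ q) {h k K δ : ℝ} (hh : 0 < h)
    (hhk : h ≤ k) (hδ : 0 < δ)
    (hfit : rpowSub p s (k ^ p / k ^ s) h / h ^ (-m)
        - deriv (rpowSub p s (k ^ p / k ^ s)) h / h ^ (-m) * (h - K + δ)
      = (s - p) * (k - K) / k ^ s) :
    (q - m) * h < q * (K - δ) := by
  have hk : 0 < k := hh.trans_le hhk
  have hGh : scaledTangent m (K - δ) (rpowSub p s (k ^ p / k ^ s))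
      (rpowSubDeriv p s (k ^ p / k ^ s)) h = (s - p) * (k - K) / k ^ s := by
    rw [← div_rpow_neg_eq_scaledTangent hh (hasDerivAt_rpowSub hh.ne'),
      show h - (K - δ) = h - K + δ by ring, hfit]
  have hGk := scaledTangent_rpowSub_div_rpow_self (L := K - δ) hp hs hps.ne hk
  by_contra! hL
  refine (scaledTangent_rpowSub_antitoneOn hp hs hh (fun x hx => ?_)
    ⟨le_rfl, hhk⟩ ⟨hhk, le_rfl⟩ hhk).not_gt (by rw [hGh, hGk]; gcongr; linarith)
  exact mul_nonpos_of_nonneg_of_nonpos (rpowSub_div_rpow_nonneg_of_le hps (hh.trans_le hx.1) hx.2)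
    (by nlinarith [hx.1])

theorem mul_lt_sub_mul_of_smoothFit_right (hp : p * (p + m - 1) = q)
    (hs : s * (s + m - 1) = q) (hsp : s < p) (hmq : m ≤ q) {h k K δ : ℝ} (hh : 0 < h)
    (hhk : h ≤ k) (hδ : 0 < δ)
    (hfit : rpowSub p s (h ^ p / h ^ s) k / k ^ (-m)
        - deriv (rpowSub p s (h ^ p / h ^ s)) k / k ^ (-m) * (k - K)
      = -(p - s) * (h - K + δ) / h ^ s) :
    q * K < (q - m) * k := by
  have hk : 0 < k := hh.trans_le hhk
  have hGk : scaledTangent m K (rpowSub p s (h ^ p / h ^ s))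
      (rpowSubDeriv p s (h ^ p / h ^ s)) k = (s - p) * (h - K + δ) / h ^ s := by
    rw [← div_rpow_neg_eq_scaledTangent hk (hasDerivAt_rpowSub hk.ne'), hfit, neg_sub]
  have hGh := scaledTangent_rpowSub_div_rpow_self (L := K) hp hs hsp.ne' hh
  by_contra! hL
  refine (scaledTangent_rpowSub_monotoneOn hp hs hh (fun x hx => ?_)
    ⟨le_rfl, hhk⟩ ⟨hhk, le_rfl⟩ hhk).not_gt
    (by rw [hGh, hGk]; exact div_lt_div_of_pos_right (by nlinarith) (by positivity))
  exact mul_nonneg (rpowSub_div_rpow_nonneg_of_ge hsp hh hx.1) (by nlinarith [hx.2])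

theorem characteristic_roots {r d σ lam κ η ν : ℝ} (hr : 0 < r) (hσ : 0 < σ)
    (hlam : lam = √(2 * r + ((r - d - σ ^ 2 / 2) / σ) ^ 2))
    (hκ : κ = (r - d - σ ^ 2 / 2) / σ ^ 2) (hη : η = lam / σ - κ) (hν : ν = -(lam / σ) - κ) :
    η * (η + 2 * (r - d) / σ ^ 2 - 1) = 2 * r / σ ^ 2 ∧
      ν * (ν + 2 * (r - d) / σ ^ 2 - 1) = 2 * r / σ ^ 2 ∧ ν < η := by
  have hlam2 : lam ^ 2 = 2 * r + ((r - d - σ ^ 2 / 2) / σ) ^ 2 := by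
    rw [hlam]; exact Real.sq_sqrt (by positivity)
  have hlam0 : 0 < lam := by rw [hlam]; positivity
  have hroot : (lam / σ) ^ 2 - κ ^ 2 = 2 * r / σ ^ 2 := by
    rw [div_pow, hlam2, hκ]; field_simp; ring
  have h2κ : 2 * (r - d) / σ ^ 2 - 1 = 2 * κ := by rw [hκ]; field_simp
  subst hη hν
  refine ⟨?_, ?_, ?_⟩
  · rw [add_sub_assoc, h2κ]; linear_combination hroot
  · rw [add_sub_assoc, h2κ]; linear_combination hroot
  · have : 0 < lam / σ := by positivity
    linarith

end SmoothFit

open SmoothFit in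
/-- Any pair `(h*, k*)` with `K < h* < k*` solving the smooth-fit system (opt-hk) satisfies
`h* < r(K − δ)/d` and `k* > (r/d)K`. -/
theorem smooth_fit_bounds (r d σ K δ : ℝ)
    (hrd : r > d) (hd : 0 < d) (hσ : 0 < σ) (hK : 0 < K) (hδ : 0 < δ)
    (lam κ η ν B : ℝ)
    (hlam : lam = Real.sqrt (2 * r + ((r - d - σ ^ 2 / 2) / σ) ^ 2))
    (hκ : κ = (r - d - σ ^ 2 / 2) / σ ^ 2)
    (hη : η = lam / σ - κ) (hν : ν = -(lam / σ) - κ) (hB : B = η - ν)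
    (ψ φ Sd : ℝ → ℝ) (hatψ hatφ : ℝ → ℝ → ℝ)
    (hψ : ψ = fun x => x ^ η) (hφ : φ = fun x => x ^ ν)
    (hhatψ : hatψ = fun h x => ψ x - (ψ h / φ h) * φ x)
    (hhatφ : hatφ = fun k x => φ x - (φ k / ψ k) * ψ x)
    (hSd : Sd = fun x => x ^ (-(2 * (r - d) / σ ^ 2)))
    (h k : ℝ) (hKh : K < h) (hhk : h < k)
    (hsys1 : hatφ k h / Sd h - (deriv (hatφ k) h / Sd h) * ((h - K) + δ) =
      B * (k - K) / ψ k)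
    (hsys2 : hatψ h k / Sd k - (deriv (hatψ h) k / Sd k) * (k - K) =
      -B * ((h - K) + δ) / φ h) :
    h < r * (K - δ) / d ∧ k > r / d * K := by
  subst hψ hφ hhatψ hhatφ hSd hB
  have hh : 0 < h := hK.trans hKh
  obtain ⟨hη, hν, hνη⟩ := characteristic_roots (hd.trans hrd) hσ hlam hκ hη hν
  have hmq : 2 * (r - d) / σ ^ 2 ≤ 2 * r / σ ^ 2 := by gcongr; linarith
  have hσ2 : 0 < 2 / σ ^ 2 := by positivity
  have hh_bound := sub_mul_lt_mul_of_smoothFit_left hν hη hνη hmq hh hhk.le hδ hsys1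
  have hk_bound := mul_lt_sub_mul_of_smoothFit_right hη hν hνη hmq hh hhk.le hδ hsys2
  rw [show 2 * r / σ ^ 2 - 2 * (r - d) / σ ^ 2 = 2 / σ ^ 2 * d by ring,
    show 2 * r / σ ^ 2 = 2 / σ ^ 2 * r by ring, mul_assoc, mul_assoc] at hh_bound hk_bound
  constructor
  · rw [lt_div_iff₀ hd]
    linarith [lt_of_mul_lt_mul_left hh_bound hσ2.le]
  · rw [gt_iff_lt, div_mul_eq_mul_div, div_lt_iff₀ hd]
    linarith [lt_of_mul_lt_mul_left hk_bound hσ2.le]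

end
end

section
/- Suppose r > d > 0 and let (h*, k*) with K < h* < k* solve the smooth-fit system (opt-hk). Define, for h* < x < k*, V(x) := ((h* − K) + δ)·φ̂_{k*}(x)/φ̂_{k*}(h*) + (k* − K)·ψ̂_{h*}(x)/ψ̂_{h*}(k*). Then (x − K)⁺ ≤ V(x) ≤ (x − K)⁺ + δ for all x ∈ (h*, k*). -/
/-!
On `(h, k)` the candidate is `V x = A x^η + C x^ν`, and the smooth-fit system says exactly that
`V` meets the two payoffs `x - K + δ` at `h` and `x - K` at `k` with slope `1` at both ends. The
gap `g x = V x - (x - K)` thus goes from `δ` to `0` with `g'` vanishing at both ends. If `g'` were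
nonnegative somewhere inside, the mean value and intermediate value theorems would produce an
interior zero of `g'`, and Rolle's theorem two zeros of
`g'' x = A η (η - 1) x^(η - 2) + C ν (ν - 1) x^(ν - 2)`. A two-term power function has at most one
positive zero unless it vanishes identically, which `η ∉ {0, 1}`, `ν < 0` and `V' h = 1` rule
out. Hence `g` decreases strictly from `δ` to `0`.
-/

open Real Set

lemma rpow_combination_zeros_subsingleton {a b p q : ℝ} (hpq : p ≠ q) (hab : a ≠ 0 ∨ b ≠ 0) :
    {x : ℝ | 0 < x ∧ a * x ^ p + b * x ^ q = 0}.Subsingleton := by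
  have hfactor : ∀ x : ℝ, 0 < x → a * x ^ p + b * x ^ q = x ^ p * (a + b * x ^ (q - p)) := by
    intro x hx
    rw [rpow_sub hx]
    field_simp [(rpow_pos_of_pos hx p).ne']
  rintro x ⟨hx, hx0⟩ y ⟨hy, hy0⟩
  rw [hfactor x hx, mul_eq_zero, or_iff_right (rpow_pos_of_pos hx p).ne'] at hx0
  rw [hfactor y hy, mul_eq_zero, or_iff_right (rpow_pos_of_pos hy p).ne'] at hy0
  have hb : b ≠ 0 := by
    rintro rfl
    simp_all
  have hxy : x ^ (q - p) = y ^ (q - p) := mul_left_cancel₀ hb (by linarith)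
  exact (rpow_left_inj hx.le hy.le (sub_ne_zero.2 hpq.symm)).1 hxy

lemma hasDerivAt_rpow_combination (a b p q : ℝ) {x : ℝ} (hx : x ≠ 0) :
    HasDerivAt (fun y => a * y ^ p + b * y ^ q) (a * p * x ^ (p - 1) + b * q * x ^ (q - 1)) x := by
  rw [mul_assoc a, mul_assoc b]
  exact ((hasDerivAt_rpow_const (Or.inl hx)).const_mul a).add
    ((hasDerivAt_rpow_const (Or.inl hx)).const_mul b)

lemma deriv_rpow_sub_mul_rpow (c p q : ℝ) {x : ℝ} (hx : x ≠ 0) :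
    deriv (fun y => y ^ p - c * y ^ q) x = p * x ^ (p - 1) - c * (q * x ^ (q - 1)) :=
  ((hasDerivAt_rpow_const (Or.inl hx)).sub
    ((hasDerivAt_rpow_const (Or.inl hx)).const_mul c)).deriv

lemma rpow_wronskian (η ν : ℝ) {x : ℝ} (hx : 0 < x) :
    η * x ^ (η - 1) * x ^ ν - x ^ η * (ν * x ^ (ν - 1)) = (η - ν) * x ^ (η + ν - 1) := by
  rw [rpow_sub_one hx.ne', rpow_sub_one hx.ne', rpow_sub_one hx.ne', rpow_add hx]
  ring

lemma rpow_mul_rpow_lt_rpow_mul_rpow {h k η ν : ℝ} (hh : 0 < h) (hhk : h < k) (hνη : ν < η) :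
    h ^ η * k ^ ν < h ^ ν * k ^ η := by
  have hk : 0 < k := hh.trans hhk
  have := rpow_lt_rpow_of_exponent_lt ((one_lt_div hh).2 hhk) hνη
  rwa [div_rpow hk.le hh.le, div_rpow hk.le hh.le,
    div_lt_div_iff₀ (rpow_pos_of_pos hh ν) (rpow_pos_of_pos hh η), mul_comm (k ^ ν),
    mul_comm (k ^ η)] at this

lemma strictAntiOn_Icc_of_deriv_eq_zero_at_ends {g g' g'' : ℝ → ℝ} {a b : ℝ} (hab : a < b)
    (hg : ∀ x ∈ Icc a b, HasDerivAt g (g' x) x) (hg' : ∀ x ∈ Icc a b, HasDerivAt g' (g'' x) x)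
    (hgab : g b < g a) (hg'a : g' a = 0) (hg'b : g' b = 0)
    (hg'' : {y ∈ Ioo a b | g'' y = 0}.Subsingleton) : StrictAntiOn g (Icc a b) := by
  have hgc : ContinuousOn g (Icc a b) := fun x hx => (hg x hx).continuousAt.continuousWithinAt
  have hg'c : ContinuousOn g' (Icc a b) := fun x hx => (hg' x hx).continuousAt.continuousWithinAt
  have hneg : ∀ x ∈ Ioo a b, g' x < 0 := by
    intro x hx
    by_contra! hx0
    obtain ⟨c, hc, hslope⟩ := exists_hasDerivAt_eq_slope g g' hab hgc
      fun y hy => hg y (Ioo_subset_Icc_self hy)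
    have hc0 : g' c < 0 := by
      rw [hslope]
      exact div_neg_of_neg_of_pos (by linarith) (by linarith)
    have hcx : uIcc c x ⊆ Ioo a b := ordConnected_Ioo.uIcc_subset hc hx
    obtain ⟨z, hz, hg'z⟩ := intermediate_value_uIcc (hg'c.mono (hcx.trans Ioo_subset_Icc_self))
      (mem_uIcc.2 (Or.inl ⟨hc0.le, hx0⟩) : (0 : ℝ) ∈ uIcc (g' c) (g' x))
    obtain ⟨haz, hzb⟩ := hcx hz
    obtain ⟨y₁, hy₁, hy₁0⟩ := exists_hasDerivAt_eq_zero haz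
      (hg'c.mono (Icc_subset_Icc le_rfl hzb.le)) (hg'a.trans hg'z.symm)
      fun y hy => hg' y ⟨hy.1.le, hy.2.le.trans hzb.le⟩
    obtain ⟨y₂, hy₂, hy₂0⟩ := exists_hasDerivAt_eq_zero hzb
      (hg'c.mono (Icc_subset_Icc haz.le le_rfl)) (hg'z.trans hg'b.symm)
      fun y hy => hg' y ⟨haz.le.trans hy.1.le, hy.2.le⟩
    exact (hy₁.2.trans hy₂.1).ne
      (hg'' ⟨⟨hy₁.1, hy₁.2.trans hzb⟩, hy₁0⟩ ⟨⟨haz.trans hy₂.1, hy₂.2⟩, hy₂0⟩)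
  rw [← interior_Icc] at hneg
  exact strictAntiOn_of_hasDerivWithinAt_neg (convex_Icc a b) hgc
    (fun x hx => (hg x (interior_subset hx)).hasDerivWithinAt) hneg

-- `p, q, s, t` stand for `ψ h, φ h, ψ k, φ k`, the primed letters for their derivatives, and
-- `S₁, S₂` for `S' h, S' k`; `hW₁`, `hW₂` say that the Wronskian of `(ψ, φ)` is `B S'`.
lemma exists_coeffs_of_smoothFit {p q s t p' q' s' t' S₁ S₂ B α β : ℝ}
    (hq : q ≠ 0) (hs : s ≠ 0) (hS₁ : S₁ ≠ 0) (hS₂ : S₂ ≠ 0) (hD : p * t ≠ q * s)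
    (hW₁ : p' * q - p * q' = B * S₁) (hW₂ : s' * t - s * t' = B * S₂)
    (sys₁ : (q - t / s * p) / S₁ - (q' - t / s * p') / S₁ * α = B * β / s)
    (sys₂ : (s - p / q * t) / S₂ - (s' - p / q * t') / S₂ * β = -B * α / q) :
    ∃ A C : ℝ,
      (∀ u v : ℝ, α * (v - t / s * u) / (q - t / s * p) + β * (u - p / q * v) / (s - p / q * t) =
        A * u + C * v) ∧
      A * p + C * q = α ∧ A * s + C * t = β ∧ A * p' + C * q' = 1 ∧ A * s' + C * t' = 1 := by
  have hD' : q * s - p * t ≠ 0 := sub_ne_zero.2 hD.symm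
  have hφ : q - t / s * p = (q * s - p * t) / s := by field_simp
  have hψ : s - p / q * t = (q * s - p * t) / q := by field_simp
  refine ⟨β / (s - p / q * t) - α * (t / s) / (q - t / s * p),
    α / (q - t / s * p) - β * (p / q) / (s - p / q * t), fun u v => by ring, ?_, ?_, ?_, ?_⟩
  all_goals rw [hφ, hψ]
  · field_simp
    ring
  · field_simp
    ring
  · rw [hφ] at sys₁
    field_simp at sys₁ ⊢
    linear_combination -sys₁ + β * hW₁
  · rw [hψ] at sys₂
    field_simp at sys₂ ⊢
    linear_combination -sys₂ - α * hW₂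

lemma rpow_combination_mem_Ioo {η ν A C K δ h k : ℝ} (hη : 0 < η) (hη1 : η ≠ 1) (hν : ν < 0)
    (hh : 0 < h) (hhk : h < k) (hδ : 0 < δ)
    (hvh : A * h ^ η + C * h ^ ν = h - K + δ) (hvk : A * k ^ η + C * k ^ ν = k - K)
    (hdh : A * η * h ^ (η - 1) + C * ν * h ^ (ν - 1) = 1)
    (hdk : A * η * k ^ (η - 1) + C * ν * k ^ (ν - 1) = 1) {x : ℝ} (hx : x ∈ Ioo h k) :
    A * x ^ η + C * x ^ ν ∈ Ioo (x - K) (x - K + δ) := by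
  have hne : ∀ y ∈ Icc h k, y ≠ 0 := fun y hy => (hh.trans_le hy.1).ne'
  have hcoeff : A * η * (η - 1) ≠ 0 ∨ C * ν * (ν - 1) ≠ 0 := by
    by_contra! hAC
    have hA : A = 0 := by simpa [hη.ne', sub_ne_zero.2 hη1] using hAC.1
    have hC : C = 0 := by simpa [hν.ne, (by linarith : ν - 1 ≠ 0)] using hAC.2
    simp [hA, hC] at hdh
  have hanti := strictAntiOn_Icc_of_deriv_eq_zero_at_ends
    (g := fun y => A * y ^ η + C * y ^ ν - (y - K))
    (g' := fun y => A * η * y ^ (η - 1) + C * ν * y ^ (ν - 1) - 1)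
    (g'' := fun y => A * η * (η - 1) * y ^ (η - 1 - 1) + C * ν * (ν - 1) * y ^ (ν - 1 - 1)) hhk
    (fun y hy => (hasDerivAt_rpow_combination A C η ν (hne y hy)).sub
      ((hasDerivAt_id y).sub_const K))
    (fun y hy => (hasDerivAt_rpow_combination _ _ _ _ (hne y hy)).sub_const 1)
    (by linarith) (by linarith) (by linarith)
    ((rpow_combination_zeros_subsingleton (by linarith) hcoeff).anti
      fun y hy => ⟨hh.trans hy.1.1, hy.2⟩)
  have hleft := hanti (left_mem_Icc.2 hhk.le) (Ioo_subset_Icc_self hx) hx.1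
  have hright := hanti (Ioo_subset_Icc_self hx) (right_mem_Icc.2 hhk.le) hx.2
  simp only at hleft hright
  constructor <;> linarith

lemma charRoots_vieta {r d σ lam κ η ν : ℝ} (hσ : 0 < σ) (hr : 0 ≤ r)
    (hlam : lam = √(2 * r + ((r - d - σ ^ 2 / 2) / σ) ^ 2))
    (hκ : κ = (r - d - σ ^ 2 / 2) / σ ^ 2) (hη : η = lam / σ - κ) (hν : ν = -(lam / σ) - κ) :
    ν ≤ η ∧ η + ν = 1 - 2 * (r - d) / σ ^ 2 ∧ η * ν = -(2 * r / σ ^ 2) := by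
  have hlam0 : 0 ≤ lam := hlam ▸ sqrt_nonneg _
  have hlam2 : (lam * σ) ^ 2 = 2 * r * σ ^ 2 + (r - d - σ ^ 2 / 2) ^ 2 := by
    rw [mul_pow, hlam, sq_sqrt (by positivity)]
    field_simp
  subst hη hν hκ
  refine ⟨by linarith [div_nonneg hlam0 hσ.le], by field_simp; ring, ?_⟩
  field_simp
  linear_combination -4 * hlam2

lemma charRoots_signs {r d σ η ν : ℝ} (hσ : 0 < σ) (hr : 0 < r) (hd : d ≠ 0) (hνη : ν ≤ η)
    (hadd : η + ν = 1 - 2 * (r - d) / σ ^ 2) (hmul : η * ν = -(2 * r / σ ^ 2)) :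
    ν < 0 ∧ 0 < η ∧ η ≠ 1 := by
  have hneg : η * ν < 0 := by
    rw [hmul, neg_lt_zero]
    positivity
  refine ⟨by nlinarith, by nlinarith, ?_⟩
  rintro rfl
  apply hd
  have : 2 * r / σ ^ 2 = 2 * (r - d) / σ ^ 2 := by linarith
  field_simp at this
  linarith

/-- For `r > d > 0` and a solution `(h*, k*)` of the smooth-fit system (opt-hk), the candidate
value function `V` on `(h*, k*)` satisfies `(x − K)⁺ ≤ V(x) ≤ (x − K)⁺ + δ`. -/
theorem candidate_value_between_payoffs (r d σ K δ : ℝ)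
    (hrd : r > d) (hd : 0 < d) (hσ : 0 < σ) (hK : 0 < K) (hδ : 0 < δ)
    (lam κ η ν B : ℝ)
    (hlam : lam = Real.sqrt (2 * r + ((r - d - σ ^ 2 / 2) / σ) ^ 2))
    (hκ : κ = (r - d - σ ^ 2 / 2) / σ ^ 2)
    (hη : η = lam / σ - κ) (hν : ν = -(lam / σ) - κ) (hB : B = η - ν)
    (ψ φ Sd : ℝ → ℝ) (hatψ hatφ : ℝ → ℝ → ℝ)
    (hψ : ψ = fun x => x ^ η) (hφ : φ = fun x => x ^ ν)
    (hhatψ : hatψ = fun h x => ψ x - (ψ h / φ h) * φ x)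
    (hhatφ : hatφ = fun k x => φ x - (φ k / ψ k) * ψ x)
    (hSd : Sd = fun x => x ^ (-(2 * (r - d) / σ ^ 2)))
    (h k : ℝ) (hKh : K < h) (hhk : h < k)
    (hsys1 : hatφ k h / Sd h - (deriv (hatφ k) h / Sd h) * ((h - K) + δ) =
      B * (k - K) / ψ k)
    (hsys2 : hatψ h k / Sd k - (deriv (hatψ h) k / Sd k) * (k - K) =
      -B * ((h - K) + δ) / φ h)
    (V : ℝ → ℝ)
    (hV : ∀ x ∈ Set.Ioo h k,
      V x = ((h - K) + δ) * hatφ k x / hatφ k h + (k - K) * hatψ h x / hatψ h k) :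
    ∀ x ∈ Set.Ioo h k, max (x - K) 0 ≤ V x ∧ V x ≤ max (x - K) 0 + δ := by
  have hr : 0 < r := hd.trans hrd
  have hh : 0 < h := hK.trans hKh
  have hk : 0 < k := hh.trans hhk
  obtain ⟨hνη, hadd, hmul⟩ := charRoots_vieta hσ hr.le hlam hκ hη hν
  obtain ⟨hν0, hη0, hη1⟩ := charRoots_signs hσ hr hd.ne' hνη hadd hmul
  have hSd_exp : -(2 * (r - d) / σ ^ 2) = η + ν - 1 := by linarith
  subst hψ hφ hhatψ hhatφ hSd hB
  simp only [hSd_exp] at hsys1 hsys2 hV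
  rw [deriv_rpow_sub_mul_rpow _ _ _ hh.ne'] at hsys1
  rw [deriv_rpow_sub_mul_rpow _ _ _ hk.ne'] at hsys2
  obtain ⟨A, C, hVAC, hvh, hvk, hdh, hdk⟩ := exists_coeffs_of_smoothFit (rpow_pos_of_pos hh ν).ne'
    (rpow_pos_of_pos hk η).ne' (rpow_pos_of_pos hh _).ne' (rpow_pos_of_pos hk _).ne'
    (rpow_mul_rpow_lt_rpow_mul_rpow hh hhk (hν0.trans hη0)).ne
    (rpow_wronskian η ν hh) (rpow_wronskian η ν hk) hsys1 hsys2
  intro x hx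
  obtain ⟨hlow, hupp⟩ := rpow_combination_mem_Ioo hη0 hη1 hν0 hh hhk hδ hvh hvk
    (by linear_combination hdh) (by linear_combination hdk) hx
  rw [hV x hx, hVAC, max_eq_left (by linarith [hx.1] : 0 ≤ x - K)]
  exact ⟨hlow.le, hupp.le⟩
end

section
/- Suppose 0 < r ≤ d and σ > 0, K > 0. The function δ(k) := −((K/k)^{−(λ+κσ)/σ}·(k(1 − (k/K)^{−2λ/σ})σ − (k − K)(λ − κσ + (K/k)^{2λ/σ}(λ + κσ))))/(2λ), obtained by solving the first-order condition (FOC1) for the penalty in terms of the exercise boundary, is non-decreasing on [K, ∞): δ′(k) ≥ 0 for all k ≥ K. -/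
/-!
With `p = λ/σ + κ` and `q = λ/σ - κ`, the penalty is `δ = σ/(2λ) · F` where
`F(t) = (t/K)^p ((q-1)t - qK) + (t/K)^(-q) ((1+p)t - pK)`, and the derivative factors as
`F'(t) = ((p+1)(q-1)t - pqK)/t · ((t/K)^p - (t/K)^(-q))`.
For `t ≥ K` both factors are nonnegative: `p ≥ 0` because `λ = √(2r + (κσ)²) ≥ |κσ|`,
and `q - p - 1 = -(2κ + 1) = 2(d - r)/σ² ≥ 0`.
-/

noncomputable section

open Filter Topology

def penaltyProfile (p q K t : ℝ) : ℝ :=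
  (t / K) ^ p * ((q - 1) * t - q * K) + (t / K) ^ (-q) * ((1 + p) * t - p * K)

section penaltyProfile

variable {p q K t : ℝ}

theorem hasDerivAt_penaltyProfile (hK : 0 < K) (ht : 0 < t) :
    HasDerivAt (penaltyProfile p q K)
      (((p + 1) * (q - 1) * t - p * q * K) / t * ((t / K) ^ p - (t / K) ^ (-q))) t := by
  have htK : 0 < t / K := div_pos ht hK
  have hscale : HasDerivAt (fun s : ℝ => s / K) (1 / K) t := (hasDerivAt_id t).div_const K
  have hpow (e : ℝ) : HasDerivAt (fun s : ℝ => (s / K) ^ e) (1 / K * e * (t / K) ^ (e - 1)) t :=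
    hscale.rpow_const (Or.inl htK.ne')
  have hlin (a b : ℝ) : HasDerivAt (fun s : ℝ => a * s - b) a t := by
    simpa using ((hasDerivAt_id t).const_mul a).sub_const b
  have hpow_sub_one (e : ℝ) : (t / K) ^ (e - 1) = (t / K) ^ e * (K / t) := by
    rw [Real.rpow_sub htK, Real.rpow_one, div_eq_mul_inv, inv_div]
  refine (((hpow p).mul (hlin (q - 1) (q * K))).add
    ((hpow (-q)).mul (hlin (1 + p) (p * K)))).congr_deriv ?_
  rw [hpow_sub_one, hpow_sub_one]
  generalize (t / K) ^ p = X
  generalize (t / K) ^ (-q) = Y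
  field_simp
  ring

theorem deriv_penaltyProfile_nonneg (hp : 0 ≤ p) (hpq : p + 1 ≤ q) (hK : 0 < K)
    (hKt : K ≤ t) :
    0 ≤ deriv (penaltyProfile p q K) t := by
  have ht : 0 < t := hK.trans_le hKt
  rw [(hasDerivAt_penaltyProfile hK ht).deriv]
  have hslope : 0 ≤ (p + 1) * (q - 1) * t - p * q * K := by
    have hcoef : 0 ≤ (p + 1) * (q - 1) := by nlinarith
    refine sub_nonneg.mpr ?_
    calc p * q * K ≤ (p + 1) * (q - 1) * K := by nlinarith
      _ ≤ (p + 1) * (q - 1) * t := mul_le_mul_of_nonneg_left hKt hcoef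
  have hpowers : (t / K) ^ (-q) ≤ (t / K) ^ p :=
    Real.rpow_le_rpow_of_exponent_le ((one_le_div hK).mpr hKt) (by linarith)
  exact mul_nonneg (div_nonneg hslope ht.le) (sub_nonneg.mpr hpowers)

end penaltyProfile

theorem penalty_eq_penaltyProfile {lam κ σ K t : ℝ} (hσ : σ ≠ 0) (hK : 0 < K) (ht : 0 < t) :
    -((K / t) ^ (-((lam + κ * σ) / σ)) *
          (t * (1 - (t / K) ^ (-(2 * lam / σ))) * σ -
            (t - K) * (lam - κ * σ + (K / t) ^ (2 * lam / σ) * (lam + κ * σ)))) /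
        (2 * lam) =
      σ / (2 * lam) * penaltyProfile (lam / σ + κ) (lam / σ - κ) K t := by
  have htK : 0 < t / K := div_pos ht hK
  have hflip (e : ℝ) : (K / t) ^ e = (t / K) ^ (-e) := by
    rw [Real.rpow_neg htK.le, ← Real.inv_rpow htK.le, inv_div]
  have hsplit : (t / K) ^ (-(lam / σ - κ)) =
      (t / K) ^ (lam / σ + κ) * (t / K) ^ (-(2 * lam / σ)) := by
    rw [← Real.rpow_add htK]
    ring_nf
  have hp : (lam + κ * σ) / σ = lam / σ + κ := by field_simp
  rw [hflip, hflip, neg_neg, hp, penaltyProfile, hsplit]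
  field_simp
  ring

/-- For `0 < r ≤ d`, the penalty `δ(k)` obtained by solving the first-order condition (FOC1)
for the penalty in terms of the exercise boundary `k` is non-decreasing on `[K, ∞)`. -/
theorem delta_of_boundary_nondecreasing (r d σ K : ℝ)
    (hr : 0 < r) (hrd : r ≤ d) (hσ : 0 < σ) (hK : 0 < K)
    (lam κ : ℝ)
    (hlam : lam = Real.sqrt (2 * r + ((r - d - σ ^ 2 / 2) / σ) ^ 2))
    (hκ : κ = (r - d - σ ^ 2 / 2) / σ ^ 2)
    (δfun : ℝ → ℝ)
    (hδfun : δfun = fun k =>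
      -((K / k) ^ (-((lam + κ * σ) / σ)) *
          (k * (1 - (k / K) ^ (-(2 * lam / σ))) * σ -
            (k - K) * (lam - κ * σ + (K / k) ^ (2 * lam / σ) * (lam + κ * σ)))) /
        (2 * lam)) :
    ∀ k : ℝ, K ≤ k → 0 ≤ deriv δfun k := by
  intro k hk
  have hk0 : 0 < k := hK.trans_le hk
  have hκσ : κ * σ = (r - d - σ ^ 2 / 2) / σ := by rw [hκ]; field_simp
  have hlam_nonneg : 0 ≤ lam := hlam ▸ Real.sqrt_nonneg _
  have hp : 0 ≤ lam / σ + κ := by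
    have hκσ_le : -(κ * σ) ≤ lam := by
      rw [hlam, hκσ]
      exact (neg_le_abs _).trans (Real.abs_le_sqrt (by linarith))
    have hsum : lam / σ + κ = (lam + κ * σ) / σ := by field_simp
    rw [hsum]
    exact div_nonneg (by linarith) hσ.le
  have hpq : lam / σ + κ + 1 ≤ lam / σ - κ := by
    have hκ_le : κ ≤ -1 / 2 := by
      rw [hκ, div_le_iff₀ (by positivity)]; linarith
    linarith
  have heq : δfun =ᶠ[𝓝 k] fun t =>
      σ / (2 * lam) * penaltyProfile (lam / σ + κ) (lam / σ - κ) K t := by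
    filter_upwards [eventually_gt_nhds hk0] with t ht
    rw [hδfun]
    exact penalty_eq_penaltyProfile hσ.ne' hK ht
  rw [heq.deriv_eq, deriv_const_mul _ (hasDerivAt_penaltyProfile hK hk0).differentiableAt]
  exact mul_nonneg (by positivity) (deriv_penaltyProfile_nonneg hp hpq hK hk)

end
end

section
/- Suppose r > 0, d > 0, σ > 0 and K > 0, and set b := ((λ/σ − κ)/(λ/σ − κ − 1))·K. Define f(x) := (x − K)(K/x)^{λ/σ − κ} + ((K/x)^{−(λ+κσ)/σ}·(x(1 − (x/K)^{−2λ/σ})σ − (x − K)(λ − κσ + (K/x)^{2λ/σ}(λ + κσ))))/(2λ). Then f(x) ≥ 0 for all x ∈ [K, b]. -/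
/-!
Write `p = λ/σ - κ`, `q = λ/σ + κ` and `t = K/x`. The expression `f x` factors as
`σ t^(-q) (1 - t^(p+q)) (x - p (x - K)) / (2λ)`. On `[K, b]` we have `t ≤ 1`, so the middle
factor is non-negative, and `b = p K / (p - 1)` is exactly the root of the last factor,
which is non-negative provided `p > 1`. The latter holds because
`λ² - (σ + κσ)² = 2d > 0`.
-/

lemma sq_lt_two_mul_add_sq {r d σ : ℝ} (hd : 0 < d) (hσ : 0 < σ) :
    (σ + (r - d - σ ^ 2 / 2) / σ) ^ 2 < 2 * r + ((r - d - σ ^ 2 / 2) / σ) ^ 2 := by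
  have key : (σ + (r - d - σ ^ 2 / 2) / σ) ^ 2 + 2 * d
      = 2 * r + ((r - d - σ ^ 2 / 2) / σ) ^ 2 := by
    field_simp
    ring
  linarith

lemma one_lt_sqrt_div_sub {r d σ : ℝ} (hd : 0 < d) (hσ : 0 < σ) :
    1 < √(2 * r + ((r - d - σ ^ 2 / 2) / σ) ^ 2) / σ - (r - d - σ ^ 2 / 2) / σ ^ 2 := by
  have h := Real.lt_sqrt_of_sq_lt (sq_lt_two_mul_add_sq (r := r) hd hσ)
  have hκ : (r - d - σ ^ 2 / 2) / σ ^ 2 = (r - d - σ ^ 2 / 2) / σ / σ := by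
    rw [div_div, sq]
  rw [hκ, ← sub_div, lt_div_iff₀ hσ]
  linarith

lemma penalty_expr_factorization {σ lam κ K x : ℝ} (hσ : σ ≠ 0) (hlam : lam ≠ 0) (hK : 0 < K)
    (hx : 0 < x) :
    (x - K) * (K / x) ^ (lam / σ - κ) +
        ((K / x) ^ (-((lam + κ * σ) / σ)) *
            (x * (1 - (x / K) ^ (-(2 * lam / σ))) * σ -
              (x - K) * (lam - κ * σ + (K / x) ^ (2 * lam / σ) * (lam + κ * σ)))) /
          (2 * lam)
      = σ * (K / x) ^ (-(lam / σ + κ)) * (1 - (K / x) ^ (2 * lam / σ)) *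
          (x - (lam / σ - κ) * (x - K)) / (2 * lam) := by
  have ht : 0 < K / x := div_pos hK hx
  have h_inv : (x / K) ^ (-(2 * lam / σ)) = (K / x) ^ (2 * lam / σ) := by
    rw [Real.rpow_neg (div_pos hx hK).le, ← Real.inv_rpow (div_pos hx hK).le, inv_div]
  have h_split : (K / x) ^ (lam / σ - κ)
      = (K / x) ^ (-(lam / σ + κ)) * (K / x) ^ (2 * lam / σ) := by
    rw [← Real.rpow_add ht]
    ring_nf
  have h_exp : -((lam + κ * σ) / σ) = -(lam / σ + κ) := by field_simp
  rw [h_inv, h_split, h_exp]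
  field_simp
  ring

lemma sub_mul_sub_nonneg {p K x : ℝ} (hp : 1 < p) (hx : x ≤ p / (p - 1) * K) :
    0 ≤ x - p * (x - K) := by
  rw [div_mul_eq_mul_div, le_div_iff₀ (sub_pos.mpr hp)] at hx
  linarith

theorem f_nonneg_on_K_b_general (r d σ K : ℝ)
    (hd : 0 < d) (hσ : 0 < σ) (hK : 0 < K)
    (lam κ b : ℝ)
    (hlam : lam = Real.sqrt (2 * r + ((r - d - σ ^ 2 / 2) / σ) ^ 2))
    (hκ : κ = (r - d - σ ^ 2 / 2) / σ ^ 2)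
    (hb : b = ((lam / σ - κ) / (lam / σ - κ - 1)) * K)
    (f : ℝ → ℝ)
    (hf : f = fun x =>
      (x - K) * (K / x) ^ (lam / σ - κ) +
        ((K / x) ^ (-((lam + κ * σ) / σ)) *
            (x * (1 - (x / K) ^ (-(2 * lam / σ))) * σ -
              (x - K) * (lam - κ * σ + (K / x) ^ (2 * lam / σ) * (lam + κ * σ)))) /
          (2 * lam)) :
    ∀ x ∈ Set.Icc K b, 0 ≤ f x := by
  rintro x ⟨hKx, hxb⟩
  have hx : 0 < x := hK.trans_le hKx
  have hlam_pos : 0 < lam := hlam ▸ Real.sqrt_pos.mpr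
    ((sq_nonneg _).trans_lt (sq_lt_two_mul_add_sq hd hσ))
  have hp : 1 < lam / σ - κ := hlam ▸ hκ ▸ one_lt_sqrt_div_sub hd hσ
  have ht : 0 < K / x := div_pos hK hx
  have hpow_le_one : (K / x) ^ (2 * lam / σ) ≤ 1 :=
    Real.rpow_le_one ht.le ((div_le_one hx).mpr hKx) (by positivity)
  have h_exercise := sub_mul_sub_nonneg hp (hb ▸ hxb)
  have h_discount := Real.rpow_nonneg ht.le (-(lam / σ + κ))
  have h_middle : 0 ≤ 1 - (K / x) ^ (2 * lam / σ) := sub_nonneg.mpr hpow_le_one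
  simp only [hf]
  rw [penalty_expr_factorization hσ.ne' hlam_pos.ne' hK hx]
  positivity

/-- The function `f` from the penalty-comparison argument is non-negative on `[K, b]`,
where `b` is the perpetual American call exercise boundary. -/
theorem f_nonneg_on_K_b (r d σ K : ℝ)
    (hr : 0 < r) (hd : 0 < d) (hσ : 0 < σ) (hK : 0 < K)
    (lam κ b : ℝ)
    (hlam : lam = Real.sqrt (2 * r + ((r - d - σ ^ 2 / 2) / σ) ^ 2))
    (hκ : κ = (r - d - σ ^ 2 / 2) / σ ^ 2)
    (hb : b = ((lam / σ - κ) / (lam / σ - κ - 1)) * K)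
    (f : ℝ → ℝ)
    (hf : f = fun x =>
      (x - K) * (K / x) ^ (lam / σ - κ) +
        ((K / x) ^ (-((lam + κ * σ) / σ)) *
            (x * (1 - (x / K) ^ (-(2 * lam / σ))) * σ -
              (x - K) * (lam - κ * σ + (K / x) ^ (2 * lam / σ) * (lam + κ * σ)))) /
          (2 * lam)) :
    ∀ x ∈ Set.Icc K b, 0 ≤ f x :=
  f_nonneg_on_K_b_general r d σ K hd hσ hK lam κ b hlam hκ hb f hf
end

section
/- Suppose r > 0, d > 0 and σ > 0, so that λ − κσ − σ > 0 and λ − κσ > 0. Then for every real y with 1 ≤ y ≤ (λ − κσ)/(λ − κσ − σ), one has 2y^{−2λ/σ}(y − 1)λ + y(1 − y^{−2λ/σ})σ ≥ (y − 1)(λ − κσ + y^{−2λ/σ}(λ + κσ)). -/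
noncomputable section

/-- The key algebraic inequality behind the positivity of `f` on `[K, b]`: for
`1 ≤ y ≤ (λ − κσ)/(λ − κσ − σ)` one has
`2y^{−2λ/σ}(y − 1)λ + y(1 − y^{−2λ/σ})σ ≥ (y − 1)(λ − κσ + y^{−2λ/σ}(λ + κσ))`. -/
theorem key_inequality (r d σ : ℝ)
    (hr : 0 < r) (hd : 0 < d) (hσ : 0 < σ)
    (lam κ : ℝ)
    (hlam : lam = Real.sqrt (2 * r + ((r - d - σ ^ 2 / 2) / σ) ^ 2))
    (hκ : κ = (r - d - σ ^ 2 / 2) / σ ^ 2)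
    (h1 : lam - κ * σ - σ > 0) (h2 : lam - κ * σ > 0) :
    ∀ y : ℝ, 1 ≤ y → y ≤ (lam - κ * σ) / (lam - κ * σ - σ) →
      (y - 1) * (lam - κ * σ + y ^ (-(2 * lam / σ)) * (lam + κ * σ)) ≤
        2 * y ^ (-(2 * lam / σ)) * (y - 1) * lam + y * (1 - y ^ (-(2 * lam / σ))) * σ := by
  intro y hy1 hy2
  have hlam0 : 0 < lam := by
    rw [hlam]
    exact Real.sqrt_pos.mpr (by positivity)
  set u := y ^ (-(2 * lam / σ)) with hu
  have hu0 : 0 ≤ u := Real.rpow_nonneg (by linarith) _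
  have hu1 : u ≤ 1 := Real.rpow_le_one_of_one_le_of_nonpos hy1 (by
    have : 0 ≤ 2 * lam / σ := by positivity
    linarith)
  have hya : y * (lam - κ * σ - σ) ≤ lam - κ * σ := by
    rwa [← le_div_iff₀ h1]
  nlinarith [mul_nonneg (sub_nonneg.mpr hu1) (by linarith : (0:ℝ) ≤ (lam - κ * σ) - y * (lam - κ * σ - σ))]

end
end

section
/- Suppose r > 0, σ > 0, K > 0, δ > 0 and k* > K, and set D := (k*/K)^{λ/σ} − (k*/K)^{−λ/σ} (> 0). The function v(x) := (k* − K)(k*/x)^κ·((K/x)^{−λ/σ} − (K/x)^{λ/σ})/D + δ(K/x)^κ·((k*/x)^{λ/σ} − (k*/x)^{−λ/σ})/D satisfies (1/2)σ²x²v″(x) + (r − d)x·v′(x) = r·v(x) for all x > 0, v(K) = δ, and v(k*) = k* − K. Moreover, v′(k*) = 1 holds if and only if k* satisfies the equation (FOC1): (k*/K)^{2λ/σ}(−2(K/k*)^{κ+λ/σ}δλ + (k* − K)(λ − κσ + (K/k*)^{2λ/σ}(λ + κσ))) = k*(−1 + (k*/K)^{2λ/σ})σ. -/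
/-!
With `μ = λ/σ`, the candidate is `C₁ x^(μ-κ) + C₂ x^(-μ-κ)` on `(0, ∞)`, and the exponents
`±μ - κ` are the two roots of the characteristic polynomial `σ²/2 p (p - 1) + (r - d) p - r`
of the Cauchy–Euler equation, which equals `σ²/2 ((p + κ)² - μ²)`.
The boundary values can be read off directly. At `k*`, with `a = (k*/K)^μ`, one finds
`k* D v'(k*) = (k* - K)((μ - κ) a + (μ + κ) / a) - 2 μ δ (K/k*)^κ`, and (FOC1) is the
equation `k* D v'(k*) = k* D` multiplied by the positive factor `σ a`.
-/

noncomputable section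

open Real Filter Set Topology

section CauchyEuler

variable {C₁ C₂ p₁ p₂ : ℝ}

theorem hasDerivAt_rpow_comb {x : ℝ} (hx : x ≠ 0) :
    HasDerivAt (fun y => C₁ * y ^ p₁ + C₂ * y ^ p₂)
      (C₁ * p₁ * x ^ (p₁ - 1) + C₂ * p₂ * x ^ (p₂ - 1)) x := by
  have h (C p : ℝ) := (hasDerivAt_rpow_const (p := p) (Or.inl hx)).const_mul C
  simpa only [mul_assoc] using (h C₁ p₁).fun_add (h C₂ p₂)

theorem deriv_eq_rpow_comb {f : ℝ → ℝ} (hf : ∀ x, 0 < x → f x = C₁ * x ^ p₁ + C₂ * x ^ p₂)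
    {x : ℝ} (hx : 0 < x) :
    deriv f x = C₁ * p₁ * x ^ (p₁ - 1) + C₂ * p₂ * x ^ (p₂ - 1) := by
  have hfx : f =ᶠ[𝓝 x] fun y => C₁ * y ^ p₁ + C₂ * y ^ p₂ :=
    eventuallyEq_of_mem (Ioi_mem_nhds hx) hf
  rw [hfx.deriv_eq, (hasDerivAt_rpow_comb hx.ne').deriv]

theorem cauchyEuler_of_rpow_comb {f : ℝ → ℝ} {a b c : ℝ}
    (hf : ∀ x, 0 < x → f x = C₁ * x ^ p₁ + C₂ * x ^ p₂)
    (h₁ : a * (p₁ * (p₁ - 1)) + b * p₁ = c) (h₂ : a * (p₂ * (p₂ - 1)) + b * p₂ = c)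
    {x : ℝ} (hx : 0 < x) :
    a * x ^ 2 * deriv (deriv f) x + b * x * deriv f x = c * f x := by
  rw [deriv_eq_rpow_comb (fun y hy => deriv_eq_rpow_comb hf hy) hx, deriv_eq_rpow_comb hf hx,
    hf x hx]
  simp only [rpow_sub_one hx.ne']
  field_simp
  linear_combination (C₁ * x ^ p₁) * h₁ + (C₂ * x ^ p₂) * h₂

end CauchyEuler

theorem blackScholes_characteristic_eq_of_sq_eq {r d σ lam p : ℝ} (hσ : σ ≠ 0)
    (hlam : lam ^ 2 = 2 * r + ((r - d - σ ^ 2 / 2) / σ) ^ 2)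
    (hp : (p + (r - d - σ ^ 2 / 2) / σ ^ 2) ^ 2 = (lam / σ) ^ 2) :
    1 / 2 * σ ^ 2 * (p * (p - 1)) + (r - d) * p = r := by
  linear_combination (norm := skip) σ ^ 2 / 2 * hp + hlam / 2
  field_simp
  ring

theorem rpow_sub_rpow_neg_pos {q μ : ℝ} (hq : 1 < q) (hμ : 0 < μ) : 0 < q ^ μ - q ^ (-μ) := by
  have h : 1 < q ^ μ := one_lt_rpow hq hμ
  rw [rpow_neg (by positivity), sub_pos]
  exact (inv_lt_one_of_one_lt₀ h).trans h

def middleValue (k K δ κ μ D x : ℝ) : ℝ :=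
  (k - K) * (k / x) ^ κ * (((K / x) ^ (-μ) - (K / x) ^ μ) / D) +
    δ * (K / x) ^ κ * (((k / x) ^ μ - (k / x) ^ (-μ)) / D)

section MiddleValue

variable {k K δ κ μ D : ℝ}

theorem middleValue_eq_rpow_comb (hK : 0 < K) (hk : 0 < k) {x : ℝ} (hx : 0 < x) :
    middleValue k K δ κ μ D x =
      ((k - K) * k ^ κ / K ^ μ - δ * K ^ κ / k ^ μ) / D * x ^ (μ - κ) +
        (δ * K ^ κ * k ^ μ - (k - K) * k ^ κ * K ^ μ) / D * x ^ (-μ - κ) := by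
  simp only [middleValue, rpow_neg (div_pos hK hx).le, rpow_neg (div_pos hk hx).le,
    div_rpow hK.le hx.le, div_rpow hk.le hx.le, rpow_sub hx, rpow_neg hx.le]
  field_simp
  ring

theorem middleValue_left (hK : 0 < K) (hD : D = (k / K) ^ μ - (k / K) ^ (-μ)) (hD0 : D ≠ 0) :
    middleValue k K δ κ μ D K = δ := by
  rw [middleValue, div_self hK.ne', ← hD]
  simp [hD0]

theorem middleValue_right (hk : 0 < k) (hD : D = (k / K) ^ μ - (k / K) ^ (-μ)) (hD0 : D ≠ 0) :
    middleValue k K δ κ μ D k = k - K := by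
  have hflip : (K / k) ^ (-μ) - (K / k) ^ μ = D := by
    rw [hD, ← inv_div k K, ← rpow_neg_eq_inv_rpow, ← rpow_neg_eq_inv_rpow, neg_neg]
  rw [middleValue, div_self hk.ne', hflip]
  simp [hD0]

theorem rpow_comb_deriv_at_right (hK : 0 < K) (hk : 0 < k) (hD0 : D ≠ 0) :
    k * D * (((k - K) * k ^ κ / K ^ μ - δ * K ^ κ / k ^ μ) / D * (μ - κ) * k ^ (μ - κ - 1) +
        (δ * K ^ κ * k ^ μ - (k - K) * k ^ κ * K ^ μ) / D * (-μ - κ) * k ^ (-μ - κ - 1)) =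
      (k - K) * ((μ - κ) * (k / K) ^ μ + (μ + κ) * (K / k) ^ μ) - 2 * μ * δ * (K / k) ^ κ := by
  simp only [rpow_sub_one hk.ne', rpow_sub hk, rpow_neg hk.le, div_rpow hK.le hk.le,
    div_rpow hk.le hK.le]
  field_simp
  ring

end MiddleValue

theorem smoothFit_iff_foc {k K δ κ σ lam v' : ℝ} (hK : 0 < K) (hk : K < k) (hσ : 0 < σ)
    (hlam : 0 < lam)
    (hv' : k * ((k / K) ^ (lam / σ) - (k / K) ^ (-(lam / σ))) * v' =
      (k - K) * ((lam / σ - κ) * (k / K) ^ (lam / σ) + (lam / σ + κ) * (K / k) ^ (lam / σ)) -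
        2 * (lam / σ) * δ * (K / k) ^ κ) :
    v' = 1 ↔
      (k / K) ^ (2 * lam / σ) *
          (-2 * (K / k) ^ (κ + lam / σ) * δ * lam +
            (k - K) * (lam - κ * σ + (K / k) ^ (2 * lam / σ) * (lam + κ * σ))) =
        k * (-1 + (k / K) ^ (2 * lam / σ)) * σ := by
  have hq : 1 < k / K := (one_lt_div hK).2 hk
  have hq0 : 0 < k / K := by linarith
  have hq0' : 0 < K / k := div_pos hK (hK.trans hk)
  set μ := lam / σ with hμ
  set a := (k / K) ^ μ
  have ha : 0 < a := rpow_pos_of_pos hq0 μ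
  have hflip : (K / k) ^ μ = a⁻¹ := by rw [← inv_div, inv_rpow hq0.le]
  have hneg : (k / K) ^ (-μ) = a⁻¹ := rpow_neg hq0.le μ
  have hkD : 0 < k * (a - a⁻¹) :=
    mul_pos (hK.trans hk) (hneg ▸ rpow_sub_rpow_neg_pos hq (div_pos hlam hσ))
  have hdouble : 2 * lam / σ = μ + μ := by rw [hμ]; ring
  have h2a : (k / K) ^ (2 * lam / σ) = a * a := by rw [hdouble, rpow_add hq0]
  have h2b : (K / k) ^ (2 * lam / σ) = a⁻¹ * a⁻¹ := by rw [hdouble, rpow_add hq0', hflip]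
  have hκμ : (K / k) ^ (κ + μ) = (K / k) ^ κ * a⁻¹ := by rw [rpow_add hq0', hflip]
  rw [hneg, hflip] at hv'
  have key : a * a * (-2 * ((K / k) ^ κ * a⁻¹) * δ * lam +
        (k - K) * (lam - κ * σ + a⁻¹ * a⁻¹ * (lam + κ * σ))) - k * (-1 + a * a) * σ =
      σ * a * (k * (a - a⁻¹)) * (v' - 1) := by
    rw [show lam = σ * μ by rw [hμ]; field_simp]
    linear_combination (norm := skip) (-(σ * a)) * hv'
    field_simp
    ring
  rw [h2a, h2b, hκμ, ← sub_eq_zero (a := a * a * _), key, mul_eq_zero_iff_left (by positivity),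
    sub_eq_zero]

theorem bvp_solution_middle_region_general (r d σ K δ : ℝ)
    (hr : 0 < r) (hσ : 0 < σ) (hK : 0 < K)
    (lam κ : ℝ)
    (hlam : lam = Real.sqrt (2 * r + ((r - d - σ ^ 2 / 2) / σ) ^ 2))
    (hκ : κ = (r - d - σ ^ 2 / 2) / σ ^ 2)
    (k : ℝ) (hk : K < k)
    (D : ℝ) (hD : D = (k / K) ^ (lam / σ) - (k / K) ^ (-(lam / σ)))
    (v : ℝ → ℝ)
    (hv : v = fun x =>
      (k - K) * (k / x) ^ κ * (((K / x) ^ (-(lam / σ)) - (K / x) ^ (lam / σ)) / D) +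
        δ * (K / x) ^ κ * (((k / x) ^ (lam / σ) - (k / x) ^ (-(lam / σ))) / D)) :
    (∀ x : ℝ, 0 < x →
      1 / 2 * σ ^ 2 * x ^ 2 * deriv (deriv v) x + (r - d) * x * deriv v x = r * v x) ∧
    v K = δ ∧ v k = k - K ∧
    (deriv v k = 1 ↔
      (k / K) ^ (2 * lam / σ) *
          (-2 * (K / k) ^ (κ + lam / σ) * δ * lam +
            (k - K) * (lam - κ * σ + (K / k) ^ (2 * lam / σ) * (lam + κ * σ))) =
        k * (-1 + (k / K) ^ (2 * lam / σ)) * σ) := by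
  have hv : v = middleValue k K δ κ (lam / σ) D := hv
  subst hv
  have hk0 : 0 < k := hK.trans hk
  have hlam2 : lam ^ 2 = 2 * r + ((r - d - σ ^ 2 / 2) / σ) ^ 2 := by
    rw [hlam, sq_sqrt (by positivity)]
  have hlam0 : 0 < lam := by rw [hlam]; positivity
  have hD0 : D ≠ 0 := hD ▸ (rpow_sub_rpow_neg_pos ((one_lt_div hK).2 hk) (div_pos hlam0 hσ)).ne'
  have hcomb (x : ℝ) (hx : 0 < x) :=
    middleValue_eq_rpow_comb (δ := δ) (κ := κ) (μ := lam / σ) (D := D) hK hk0 hx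
  refine ⟨fun x hx => cauchyEuler_of_rpow_comb hcomb ?_ ?_ hx, middleValue_left hK hD hD0,
    middleValue_right hk0 hD hD0, smoothFit_iff_foc hK hk hσ hlam0 ?_⟩
  · exact blackScholes_characteristic_eq_of_sq_eq hσ.ne' hlam2 (by rw [hκ]; ring)
  · exact blackScholes_characteristic_eq_of_sq_eq hσ.ne' hlam2 (by rw [hκ]; ring)
  · rw [← hD, deriv_eq_rpow_comb hcomb hk0, rpow_comb_deriv_at_right hK hk0 hD0]

/-- The candidate function `v` on `(K, k*)` is `r`-harmonic on `(0, ∞)`, satisfies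
`v(K) = δ` and `v(k*) = k* − K`, and the smooth-fit condition `v′(k*) = 1` holds if and only
if `k*` satisfies the first-order condition (FOC1). -/
theorem bvp_solution_middle_region (r d σ K δ : ℝ)
    (hr : 0 < r) (hd : 0 ≤ d) (hσ : 0 < σ) (hK : 0 < K) (hδ : 0 < δ)
    (lam κ : ℝ)
    (hlam : lam = Real.sqrt (2 * r + ((r - d - σ ^ 2 / 2) / σ) ^ 2))
    (hκ : κ = (r - d - σ ^ 2 / 2) / σ ^ 2)
    (k : ℝ) (hk : K < k)
    (D : ℝ) (hD : D = (k / K) ^ (lam / σ) - (k / K) ^ (-(lam / σ)))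
    (v : ℝ → ℝ)
    (hv : v = fun x =>
      (k - K) * (k / x) ^ κ * (((K / x) ^ (-(lam / σ)) - (K / x) ^ (lam / σ)) / D) +
        δ * (K / x) ^ κ * (((k / x) ^ (lam / σ) - (k / x) ^ (-(lam / σ))) / D)) :
    (∀ x : ℝ, 0 < x →
      1 / 2 * σ ^ 2 * x ^ 2 * deriv (deriv v) x + (r - d) * x * deriv v x = r * v x) ∧
    v K = δ ∧ v k = k - K ∧
    (deriv v k = 1 ↔
      (k / K) ^ (2 * lam / σ) *
          (-2 * (K / k) ^ (κ + lam / σ) * δ * lam +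
            (k - K) * (lam - κ * σ + (K / k) ^ (2 * lam / σ) * (lam + κ * σ))) =
        k * (-1 + (k / K) ^ (2 * lam / σ)) * σ) :=
  bvp_solution_middle_region_general r d σ K δ hr hσ hK lam κ hlam hκ k hk D hD v hv

end
end

section
/- Suppose 0 < r ≤ d, σ > 0, K > 0, k* > K, and 0 < δ ≤ (k* − K)(K/k*)^{λ/σ − κ}. Let v be given on (K, k*) by v(x) := (k* − K)(k*/x)^κ·((K/x)^{−λ/σ} − (K/x)^{λ/σ})/D + δ(K/x)^κ·((k*/x)^{λ/σ} − (k*/x)^{−λ/σ})/D with D := (k*/K)^{λ/σ} − (k*/K)^{−λ/σ}. Then v′(x) ≥ 0 for every x ∈ (K, k*), i.e. v is non-decreasing on (K, k*). -/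
/-!
On `(0, ∞)` the candidate is a combination `C₁ x ^ (α - κ) + C₂ x ^ (-(α + κ))` with `α = λ / σ`.
Since `r > 0` we have `|κ| < α`, so both exponents are nonzero of opposite signs, and the bound on
`δ` makes `C₁ ≥ 0 ≥ C₂`: both terms are non-decreasing.
-/

noncomputable section

open Real Set Filter

lemma abs_lt_sqrt_add_sq {a : ℝ} (ha : 0 < a) (b : ℝ) : |b| < √(a + b ^ 2) := by
  rw [← sqrt_sq_eq_abs]
  exact sqrt_lt_sqrt (sq_nonneg b) (by linarith)

lemma abs_div_sq_lt_sqrt_add_sq_div {a σ : ℝ} (ha : 0 < a) (hσ : 0 < σ) (μ : ℝ) :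
    |μ / σ ^ 2| < √(a + (μ / σ) ^ 2) / σ := by
  have h : |μ / σ ^ 2| = |μ / σ| / σ := by
    rw [abs_div, abs_div, abs_of_pos hσ, abs_of_pos (pow_pos hσ 2)]
    ring
  rw [h]
  exact div_lt_div_of_pos_right (abs_lt_sqrt_add_sq ha _) hσ

lemma rpow_neg_lt_rpow_self {t α : ℝ} (ht : 1 < t) (hα : 0 < α) : t ^ (-α) < t ^ α :=
  (rpow_lt_rpow_left_iff ht).mpr (by linarith)

lemma div_rpow_sub_mul {K k : ℝ} (hK : 0 < K) (hk : 0 < k) (a b : ℝ) :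
    (K / k) ^ (a - b) * (K ^ b * k ^ a) = K ^ a * k ^ b := by
  have := rpow_pos_of_pos hk a
  rw [div_rpow hK.le hk.le, rpow_sub hK, rpow_sub hk]
  field_simp

lemma mul_rpow_le_of_le_mul_div_rpow {K k c δ a b : ℝ} (hK : 0 < K) (hk : 0 < k)
    (h : δ ≤ c * (K / k) ^ (a - b)) : δ * (K ^ b * k ^ a) ≤ c * (K ^ a * k ^ b) :=
  calc δ * (K ^ b * k ^ a) ≤ c * (K / k) ^ (a - b) * (K ^ b * k ^ a) :=
        mul_le_mul_of_nonneg_right h (by positivity)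
    _ = c * (K ^ a * k ^ b) := by rw [mul_assoc, div_rpow_sub_mul hK hk]

lemma candidate_eqOn_rpow_combination {K k c δ α κ D : ℝ} (hK : 0 < K) (hk : 0 < k)
    (hD : D ≠ 0) :
    EqOn (fun x => c * (k / x) ^ κ * (((K / x) ^ (-α) - (K / x) ^ α) / D) +
        δ * (K / x) ^ κ * (((k / x) ^ α - (k / x) ^ (-α)) / D))
      (fun x => (c * (K ^ (-α) * k ^ κ) - δ * (K ^ κ * k ^ (-α))) / D * x ^ (α - κ) +
        (δ * (K ^ κ * k ^ α) - c * (K ^ α * k ^ κ)) / D * x ^ (-(α + κ)))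
      (Ioi 0) := by
  intro x (hx : 0 < x)
  have := rpow_pos_of_pos hx α
  have := rpow_pos_of_pos hx κ
  simp only [div_rpow hK.le hx.le, div_rpow hk.le hx.le, rpow_sub hx, rpow_neg hx.le,
    rpow_add hx, rpow_neg hK.le, rpow_neg hk.le]
  field_simp
  ring

lemma deriv_rpow_combination_nonneg {C₁ C₂ a b x : ℝ} (hx : 0 < x) (hC₁ : 0 ≤ C₁)
    (hC₂ : C₂ ≤ 0) (ha : 0 ≤ a) (hb : 0 ≤ b) :
    0 ≤ deriv (fun y => C₁ * y ^ a + C₂ * y ^ (-b)) x := by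
  have h₁ := (hasDerivAt_rpow_const (p := a) (Or.inl hx.ne')).const_mul C₁
  have h₂ := (hasDerivAt_rpow_const (p := -b) (Or.inl hx.ne')).const_mul C₂
  rw [(h₁.fun_add h₂).deriv]
  have := rpow_pos_of_pos hx (a - 1)
  have := mul_nonneg_of_nonpos_of_nonpos hC₂
    (mul_nonpos_of_nonpos_of_nonneg (neg_nonpos.mpr hb) (rpow_pos_of_pos hx (-b - 1)).le)
  positivity

theorem candidate_nondecreasing_middle_general (r d σ K δ : ℝ)
    (hr : 0 < r) (hσ : 0 < σ) (hK : 0 < K)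
    (lam κ : ℝ)
    (hlam : lam = Real.sqrt (2 * r + ((r - d - σ ^ 2 / 2) / σ) ^ 2))
    (hκ : κ = (r - d - σ ^ 2 / 2) / σ ^ 2)
    (k : ℝ) (hk : K < k)
    (hδle : δ ≤ (k - K) * (K / k) ^ (lam / σ - κ))
    (D : ℝ) (hD : D = (k / K) ^ (lam / σ) - (k / K) ^ (-(lam / σ)))
    (v : ℝ → ℝ)
    (hv : v = fun x =>
      (k - K) * (k / x) ^ κ * (((K / x) ^ (-(lam / σ)) - (K / x) ^ (lam / σ)) / D) +
        δ * (K / x) ^ κ * (((k / x) ^ (lam / σ) - (k / x) ^ (-(lam / σ))) / D)) :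
    ∀ x ∈ Set.Ioo K k, 0 ≤ deriv v x := by
  intro x hx
  have hκα : |κ| < lam / σ := by
    rw [hκ, hlam]; exact abs_div_sq_lt_sqrt_add_sq_div (by positivity) hσ _
  set α := lam / σ
  have hk₀ : 0 < k := hK.trans hk
  have hx₀ : 0 < x := hK.trans hx.1
  obtain ⟨hακ, hκ'⟩ := abs_lt.mp hκα
  have hD₀ : 0 < D := hD ▸ sub_pos.mpr
    (rpow_neg_lt_rpow_self ((one_lt_div hK).mpr hk) (by linarith))
  -- `K / k < 1`, so lowering the exponent from `α - κ` to `-α - κ` only weakens the bound on `δ`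
  have hδle' : δ ≤ (k - K) * (K / k) ^ (-α - κ) :=
    hδle.trans (mul_le_mul_of_nonneg_left (rpow_le_rpow_of_exponent_ge (by positivity)
      ((div_le_one hk₀).mpr hk.le) (by linarith)) (by linarith))
  rw [hv, ((candidate_eqOn_rpow_combination hK hk₀ hD₀.ne').eventuallyEq_of_mem
    (Ioi_mem_nhds hx₀)).deriv_eq]
  refine deriv_rpow_combination_nonneg hx₀ (div_nonneg ?_ hD₀.le)
    (div_nonpos_of_nonpos_of_nonneg ?_ hD₀.le) (by linarith) (by linarith)
  · linarith [mul_rpow_le_of_le_mul_div_rpow hK hk₀ hδle']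
  · linarith [mul_rpow_le_of_le_mul_div_rpow hK hk₀ (a := α) (b := κ) hδle]

/-- For `0 < r ≤ d` and `0 < δ ≤ (k* − K)(K/k*)^{λ/σ − κ}`, the candidate value function `v`
is non-decreasing on `(K, k*)`. -/
theorem candidate_nondecreasing_middle (r d σ K δ : ℝ)
    (hr : 0 < r) (hrd : r ≤ d) (hσ : 0 < σ) (hK : 0 < K) (hδ : 0 < δ)
    (lam κ : ℝ)
    (hlam : lam = Real.sqrt (2 * r + ((r - d - σ ^ 2 / 2) / σ) ^ 2))
    (hκ : κ = (r - d - σ ^ 2 / 2) / σ ^ 2)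
    (k : ℝ) (hk : K < k)
    (hδle : δ ≤ (k - K) * (K / k) ^ (lam / σ - κ))
    (D : ℝ) (hD : D = (k / K) ^ (lam / σ) - (k / K) ^ (-(lam / σ)))
    (v : ℝ → ℝ)
    (hv : v = fun x =>
      (k - K) * (k / x) ^ κ * (((K / x) ^ (-(lam / σ)) - (K / x) ^ (lam / σ)) / D) +
        δ * (K / x) ^ κ * (((k / x) ^ (lam / σ) - (k / x) ^ (-(lam / σ))) / D)) :
    ∀ x ∈ Set.Ioo K k, 0 ≤ deriv v x :=
  candidate_nondecreasing_middle_general r d σ K δ hr hσ hK lam κ hlam hκ k hk hδle D hD v hv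
end
end

section
/- Suppose 0 < r ≤ d, σ > 0, K > 0, k* > K, and 0 < δ ≤ (k* − K)(K/k*)^{λ/σ − κ}. Let v be given on (K, k*) by v(x) := (k* − K)(k*/x)^κ·((K/x)^{−λ/σ} − (K/x)^{λ/σ})/D + δ(K/x)^κ·((k*/x)^{λ/σ} − (k*/x)^{−λ/σ})/D with D := (k*/K)^{λ/σ} − (k*/K)^{−λ/σ}. Then v″(x) > 0 for every x ∈ (K, k*), i.e. v is strictly convex on (K, k*). (This follows since v″(x) = (2/(σ²x²))[(d − r)x·v′(x) + r·v(x)], v′ ≥ 0 and v > 0 on (K, k*).) -/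
/-! On `(0, ∞)` the candidate is `C₁ x ^ (λ/σ - κ) + C₂ x ^ (-λ/σ - κ)`, and both exponents are roots
of the characteristic polynomial of the Euler equation `σ²/2 · x² v'' = (d - r) x v' + r v`, so `v`
solves it. The bound on `δ` makes `C₂ ≤ 0 ≤ C₁`; as `λ/σ > |κ|`, this gives `x v' ≥ 0`, while
`v > 0` on `(K, k*)` is read off its defining formula. With `r > 0` and `d ≥ r` the equation then
forces `v'' > 0`. -/

open Set Filter Topology

section TwoPower

variable {A B a b x : ℝ}

lemma hasDerivAt_two_power (hx : 0 < x) :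
    HasDerivAt (fun y => A * y ^ a + B * y ^ b)
      (A * (a * x ^ (a - 1)) + B * (b * x ^ (b - 1))) x :=
  ((Real.hasDerivAt_rpow_const (Or.inl hx.ne')).const_mul A).add
    ((Real.hasDerivAt_rpow_const (Or.inl hx.ne')).const_mul B)

lemma deriv_deriv_two_power (hx : 0 < x) :
    deriv (deriv fun y => A * y ^ a + B * y ^ b) x =
      A * (a * ((a - 1) * x ^ (a - 1 - 1))) + B * (b * ((b - 1) * x ^ (b - 1 - 1))) := by
  have hderiv : deriv (fun y => A * y ^ a + B * y ^ b) =ᶠ[𝓝 x]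
      fun y => (A * a) * y ^ (a - 1) + (B * b) * y ^ (b - 1) := by
    filter_upwards [Ioi_mem_nhds hx] with y hy
    rw [(hasDerivAt_two_power hy).deriv]
    ring
  rw [hderiv.deriv_eq, (hasDerivAt_two_power hx).deriv]
  ring

lemma euler_two_power {α β γ : ℝ} (ha : α * (a * (a - 1)) = β * a + γ)
    (hb : α * (b * (b - 1)) = β * b + γ) (hx : 0 < x) :
    α * x ^ 2 * deriv (deriv fun y => A * y ^ a + B * y ^ b) x =
      β * (A * a * x ^ a + B * b * x ^ b) + γ * (A * x ^ a + B * x ^ b) := by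
  rw [deriv_deriv_two_power hx]
  simp only [Real.rpow_sub_one hx.ne']
  field_simp
  linear_combination A * x ^ a * ha + B * x ^ b * hb

lemma deriv_deriv_two_power_pos {α β γ : ℝ} (hα : 0 < α) (hβ : 0 ≤ β) (hγ : 0 < γ)
    (ha : α * (a * (a - 1)) = β * a + γ) (hb : α * (b * (b - 1)) = β * b + γ) (hx : 0 < x)
    (hA : 0 ≤ A) (ha₀ : 0 ≤ a) (hB : B ≤ 0) (hb₀ : b ≤ 0) (hf : 0 < A * x ^ a + B * x ^ b) :
    0 < deriv (deriv fun y => A * y ^ a + B * y ^ b) x := by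
  have hxf' : 0 ≤ A * a * x ^ a + B * b * x ^ b :=
    add_nonneg (mul_nonneg (mul_nonneg hA ha₀) (Real.rpow_nonneg hx.le a))
      (mul_nonneg (mul_nonneg_of_nonpos_of_nonpos hB hb₀) (Real.rpow_nonneg hx.le b))
  refine pos_of_mul_pos_right ?_ (by positivity : 0 ≤ α * x ^ 2)
  rw [euler_two_power ha hb hx]
  positivity

end TwoPower

lemma char_root {r d σ κ m : ℝ} (hκ : σ ^ 2 * κ = r - d - σ ^ 2 / 2)
    (hm : σ ^ 2 * (m + κ) ^ 2 = 2 * r + σ ^ 2 * κ ^ 2) :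
    σ ^ 2 / 2 * (m * (m - 1)) = (d - r) * m + r := by
  linear_combination (1 / 2) * hm - m * hκ

lemma sq_mul_sq_lam_div {r d σ lam κ : ℝ} (hr : 0 ≤ r) (hσ : σ ≠ 0)
    (hlam : lam = Real.sqrt (2 * r + ((r - d - σ ^ 2 / 2) / σ) ^ 2))
    (hκ : κ = (r - d - σ ^ 2 / 2) / σ ^ 2) :
    σ ^ 2 * (lam / σ) ^ 2 = 2 * r + σ ^ 2 * κ ^ 2 := by
  rw [hlam, div_pow, Real.sq_sqrt (by positivity), hκ]
  field_simp

lemma sub_rpow_neg_pos {t L : ℝ} (ht : 1 < t) (hL : 0 < L) : 0 < t ^ L - t ^ (-L) :=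
  sub_pos.2 (Real.rpow_lt_rpow_of_exponent_lt ht (by linarith))

lemma rpow_neg_sub_pos {t L : ℝ} (ht₀ : 0 < t) (ht : t < 1) (hL : 0 < L) :
    0 < t ^ (-L) - t ^ L :=
  sub_pos.2 (Real.rpow_lt_rpow_of_exponent_gt ht₀ ht (by linarith))

/-- The candidate `v` of the statement, with `L = λ/σ`. -/
noncomputable def candidateValue (K k δ κ L D x : ℝ) : ℝ :=
  (k - K) * (k / x) ^ κ * (((K / x) ^ (-L) - (K / x) ^ L) / D) +
    δ * (K / x) ^ κ * (((k / x) ^ L - (k / x) ^ (-L)) / D)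

section CandidateValue

variable {K k δ κ L D x : ℝ}

lemma candidateValue_eq_two_power (hK : 0 < K) (hk : 0 < k) (hx : 0 < x) :
    candidateValue K k δ κ L D x =
      ((k - K) * k ^ κ * K ^ (-L) - δ * K ^ κ * k ^ (-L)) / D * x ^ (L - κ) +
        (δ * K ^ κ * k ^ L - (k - K) * k ^ κ * K ^ L) / D * x ^ (-L - κ) := by
  simp only [candidateValue, Real.div_rpow hK.le hx.le, Real.div_rpow hk.le hx.le,
    Real.rpow_sub hx, Real.rpow_neg hx.le, Real.rpow_neg hK.le, Real.rpow_neg hk.le]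
  have := (Real.rpow_pos_of_pos hx L).ne'
  have := (Real.rpow_pos_of_pos hx κ).ne'
  field_simp
  ring

lemma candidateValue_pos (hK : 0 < K) (hKx : K < x) (hxk : x < k) (hδ : 0 ≤ δ) (hL : 0 < L)
    (hD : 0 < D) : 0 < candidateValue K k δ κ L D x := by
  have hx : 0 < x := hK.trans hKx
  have hfirst := rpow_neg_sub_pos (div_pos hK hx) ((div_lt_one hx).2 hKx) hL
  have hsecond := sub_rpow_neg_pos ((one_lt_div hx).2 hxk) hL
  have hk_pow := Real.rpow_pos_of_pos (div_pos (hx.trans hxk) hx) κ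
  have hK_pow := Real.rpow_pos_of_pos (div_pos hK hx) κ
  have hkK : 0 < k - K := by linarith
  unfold candidateValue
  positivity

lemma candidateValue_coeffs_sign (hK : 0 < K) (hk : K < k) (hδ : 0 ≤ δ) (hL : 0 < L)
    (hD : 0 < D) (hδle : δ ≤ (k - K) * (K / k) ^ (L - κ)) :
    0 ≤ ((k - K) * k ^ κ * K ^ (-L) - δ * K ^ κ * k ^ (-L)) / D ∧
      (δ * K ^ κ * k ^ L - (k - K) * k ^ κ * K ^ L) / D ≤ 0 := by
  have hk₀ : 0 < k := hK.trans hk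
  have hKL := Real.rpow_pos_of_pos hK L
  have hkL := Real.rpow_pos_of_pos hk₀ L
  have hKκ := Real.rpow_pos_of_pos hK κ
  have hkκ := Real.rpow_pos_of_pos hk₀ κ
  have hδ_cleared : δ * K ^ κ * k ^ L ≤ (k - K) * k ^ κ * K ^ L := by
    rw [Real.rpow_sub (div_pos hK hk₀), Real.div_rpow hK.le hk₀.le,
      Real.div_rpow hK.le hk₀.le] at hδle
    calc δ * K ^ κ * k ^ L ≤ (k - K) * (K ^ L / k ^ L / (K ^ κ / k ^ κ)) * K ^ κ * k ^ L := by
          gcongr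
      _ = (k - K) * k ^ κ * K ^ L := by field_simp
  have hKk : K ^ L < k ^ L := Real.rpow_lt_rpow hK.le hk hL
  refine ⟨div_nonneg ?_ hD.le, div_nonpos_of_nonpos_of_nonneg (by linarith) hD.le⟩
  rw [Real.rpow_neg hK.le, Real.rpow_neg hk₀.le, sub_nonneg, ← div_eq_mul_inv,
    ← div_eq_mul_inv, div_le_div_iff₀ hkL hKL]
  calc δ * K ^ κ * K ^ L ≤ δ * K ^ κ * k ^ L := by gcongr
    _ ≤ (k - K) * k ^ κ * K ^ L := hδ_cleared
    _ ≤ (k - K) * k ^ κ * k ^ L := by gcongr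

end CandidateValue

/-- For `0 < r ≤ d` and `0 < δ ≤ (k* − K)(K/k*)^{λ/σ − κ}`, the candidate value function `v`
is strictly convex on `(K, k*)`. -/
theorem candidate_strictly_convex_middle (r d σ K δ : ℝ)
    (hr : 0 < r) (hrd : r ≤ d) (hσ : 0 < σ) (hK : 0 < K) (hδ : 0 < δ)
    (lam κ : ℝ)
    (hlam : lam = Real.sqrt (2 * r + ((r - d - σ ^ 2 / 2) / σ) ^ 2))
    (hκ : κ = (r - d - σ ^ 2 / 2) / σ ^ 2)
    (k : ℝ) (hk : K < k)
    (hδle : δ ≤ (k - K) * (K / k) ^ (lam / σ - κ))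
    (D : ℝ) (hD : D = (k / K) ^ (lam / σ) - (k / K) ^ (-(lam / σ)))
    (v : ℝ → ℝ)
    (hv : v = fun x =>
      (k - K) * (k / x) ^ κ * (((K / x) ^ (-(lam / σ)) - (K / x) ^ (lam / σ)) / D) +
        δ * (K / x) ^ κ * (((k / x) ^ (lam / σ) - (k / x) ^ (-(lam / σ))) / D)) :
    ∀ x ∈ Set.Ioo K k, 0 < deriv (deriv v) x := by
  rintro x ⟨hKx, hxk⟩
  have hx : 0 < x := hK.trans hKx
  subst hv
  change 0 < deriv (deriv fun y => candidateValue K k δ κ (lam / σ) D y) x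
  set L := lam / σ
  have hL : 0 < L := div_pos (hlam ▸ Real.sqrt_pos.2 (by positivity)) hσ
  have hL_sq := sq_mul_sq_lam_div hr.le hσ.ne' hlam hκ
  have hκ' : σ ^ 2 * κ = r - d - σ ^ 2 / 2 := by rw [hκ]; field_simp
  obtain ⟨hκ_gt, hκ_lt⟩ : -L < κ ∧ κ < L :=
    abs_lt_of_sq_lt_sq' (lt_of_mul_lt_mul_left (by linarith) (sq_nonneg σ)) hL.le
  have hD_pos : 0 < D := hD ▸ sub_rpow_neg_pos ((one_lt_div hK).2 hk) hL
  have hv := fun y (hy : y ∈ Ioi (0 : ℝ)) =>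
    candidateValue_eq_two_power (δ := δ) (κ := κ) (L := L) (D := D) hK (hK.trans hk) hy
  rw [((EqOn.eventuallyEq_of_mem hv (Ioi_mem_nhds hx)).deriv).deriv_eq]
  obtain ⟨hC₁, hC₂⟩ := candidateValue_coeffs_sign hK hk hδ.le hL hD_pos hδle
  refine deriv_deriv_two_power_pos (by positivity) (sub_nonneg.2 hrd) hr
    (char_root hκ' ?_) (char_root hκ' ?_) hx hC₁ (by linarith) hC₂ (by linarith) ?_
  · rwa [sub_add_cancel]
  · rwa [sub_add_cancel, neg_sq]
  · rw [← hv x hx]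
    exact candidateValue_pos hK hKx hxk hδ.le hL hD_pos
end

section
/- Suppose r > 0, σ > 0, K > 0, δ > 0 and k* > K. Let v be given on (K, k*) by v(x) := (k* − K)(k*/x)^κ·((K/x)^{−λ/σ} − (K/x)^{λ/σ})/D + δ(K/x)^κ·((k*/x)^{λ/σ} − (k*/x)^{−λ/σ})/D with D := (k*/K)^{λ/σ} − (k*/K)^{−λ/σ}, and let w(x) := δ(x/K)^{λ/σ − κ} on (0, K]. Then the right-hand derivative of v at K is at least the left-hand derivative w′(K) = (λ/σ − κ)δ/K if and only if δ ≤ (k* − K)(K/k*)^{λ/σ − κ}. Equivalently, the derivative jump v′(K⁺) − w′(K⁻) = (2(k* − K)(k*/K)^{κ+λ/σ}λ − 2(k*/K)^{2λ/σ}δλ)/((−1 + (k*/K)^{2λ/σ})Kσ) is ≥ 0 precisely when δ ≤ (k* − K)(K/k*)^{λ/σ − κ}. -/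
/-!
Both pieces are finite sums of products of powers of `x`, so the one-sided derivatives at the
strike are ordinary derivatives. With `X = (k*/K)^{λ/σ}` and `Y = (k*/K)^κ` the jump collapses to
`2(λ/σ) X ((k* − K) Y − δ X) / (K (X² − 1))`, and since `X > 1` its sign is that of
`(k* − K) Y / X − δ = (k* − K)(K/k*)^{λ/σ − κ} − δ`.
-/

open Real

lemma hasDerivAt_div_rpow {c x : ℝ} (p : ℝ) (hc : c ≠ 0) (hx : x ≠ 0) :
    HasDerivAt (fun y => (c / y) ^ p) (-(p * (c / x) ^ p) / x) x := by
  have hcx : c / x ≠ 0 := div_ne_zero hc hx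
  have hquot : HasDerivAt (fun y => c / y) (c * -(x ^ 2)⁻¹) x := by
    simpa only [div_eq_mul_inv] using (hasDerivAt_inv hx).const_mul c
  refine (hquot.rpow_const (p := p) (Or.inl hcx)).congr_deriv ?_
  rw [rpow_sub_one hcx]
  field_simp

lemma hasDerivAt_const_mul_div_self_rpow {K : ℝ} (δ p : ℝ) (hK : K ≠ 0) :
    HasDerivAt (fun x => δ * (x / K) ^ p) (p * δ / K) K := by
  have hself : HasDerivAt (fun x => x / K) (1 / K) K := (hasDerivAt_id K).div_const K
  refine ((hself.rpow_const (p := p) (Or.inl (by simpa using hK))).const_mul δ).congr_deriv ?_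
  rw [div_self hK, one_rpow]
  ring

lemma hasDerivAt_strike_candidate {K k : ℝ} (a δ κ b D : ℝ) (hK : K ≠ 0) (hk : k ≠ 0) :
    HasDerivAt
      (fun x => a * (k / x) ^ κ * (((K / x) ^ (-b) - (K / x) ^ b) / D) +
        δ * (K / x) ^ κ * (((k / x) ^ b - (k / x) ^ (-b)) / D))
      ((2 * a * b * (k / K) ^ κ -
          δ * (κ * ((k / K) ^ b - (k / K) ^ (-b)) + b * ((k / K) ^ b + (k / K) ^ (-b)))) /
        (K * D)) K := by
  have hfirst := ((hasDerivAt_div_rpow κ hk hK).const_mul a).mul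
    (((hasDerivAt_div_rpow (-b) hK hK).sub (hasDerivAt_div_rpow b hK hK)).div_const D)
  have hsecond := ((hasDerivAt_div_rpow κ hK hK).const_mul δ).mul
    (((hasDerivAt_div_rpow b hk hK).sub (hasDerivAt_div_rpow (-b) hk hK)).div_const D)
  refine (hfirst.add hsecond).congr_deriv ?_
  simp only [div_self hK, one_rpow, Pi.sub_apply]
  field_simp
  ring

section StrikeJump

variable {K k : ℝ} (a δ κ lam σ : ℝ)

lemma strike_jump_eq (hq : 0 < k / K) (hX : (k / K) ^ (lam / σ) ≠ 1) :
    (2 * a * (lam / σ) * (k / K) ^ κ - δ * (κ * ((k / K) ^ (lam / σ) - (k / K) ^ (-(lam / σ))) +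
          lam / σ * ((k / K) ^ (lam / σ) + (k / K) ^ (-(lam / σ))))) /
        (K * ((k / K) ^ (lam / σ) - (k / K) ^ (-(lam / σ)))) - (lam / σ - κ) * δ / K =
      (2 * a * (k / K) ^ (κ + lam / σ) * lam - 2 * (k / K) ^ (2 * lam / σ) * δ * lam) /
        ((-1 + (k / K) ^ (2 * lam / σ)) * K * σ) := by
  have hK : K ≠ 0 := by
    rintro rfl
    simp at hq
  have hσ : σ ≠ 0 := by
    rintro rfl
    simp at hX
  have hsq : (k / K) ^ (2 * lam / σ) = ((k / K) ^ (lam / σ)) ^ 2 := by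
    rw [mul_div_assoc, mul_comm, rpow_mul hq.le, rpow_two]
  rw [hsq, rpow_neg hq.le, rpow_add hq, neg_add_eq_sub]
  set X := (k / K) ^ (lam / σ)
  have hX0 : 0 < X := rpow_pos_of_pos hq _
  have hX2 : X ^ 2 - 1 ≠ 0 := by
    intro h
    exact hX (by nlinarith)
  have hD : X - X⁻¹ = (X ^ 2 - 1) / X := by field_simp
  rw [hD]
  field_simp
  ring

lemma strike_jump_nonneg_iff (hK : 0 < K) (hk : K < k) (hσ : 0 < σ) (hlam : 0 < lam) :
    (2 * a * (k / K) ^ (κ + lam / σ) * lam - 2 * (k / K) ^ (2 * lam / σ) * δ * lam) /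
        ((-1 + (k / K) ^ (2 * lam / σ)) * K * σ) ≥ 0 ↔
      δ ≤ a * (K / k) ^ (lam / σ - κ) := by
  have hq : 1 < k / K := (one_lt_div hK).mpr hk
  have hsq : (k / K) ^ (2 * lam / σ) = ((k / K) ^ (lam / σ)) ^ 2 := by
    rw [mul_div_assoc, mul_comm, rpow_mul (by positivity), rpow_two]
  rw [hsq, rpow_add (by positivity), ← inv_div k K, inv_rpow (by positivity),
    rpow_sub (by positivity), inv_div]
  set X := (k / K) ^ (lam / σ)
  set Y := (k / K) ^ κ
  have hX : 1 < X := one_lt_rpow hq (by positivity)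
  have hden : 0 < (-1 + X ^ 2) * K * σ := by
    have : 0 < -1 + X ^ 2 := by nlinarith
    positivity
  have hfactor : 0 < 2 * lam * X := by positivity
  rw [ge_iff_le, le_div_iff₀ hden, zero_mul, ← mul_div_assoc, le_div_iff₀ (by positivity)]
  constructor <;> intro h <;> nlinarith

end StrikeJump

theorem derivative_jump_at_strike_general (r d σ K δ : ℝ)
    (hr : 0 < r) (hσ : 0 < σ) (hK : 0 < K)
    (lam κ : ℝ)
    (hlam : lam = Real.sqrt (2 * r + ((r - d - σ ^ 2 / 2) / σ) ^ 2))
    (k : ℝ) (hk : K < k)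
    (D : ℝ) (hD : D = (k / K) ^ (lam / σ) - (k / K) ^ (-(lam / σ)))
    (v w : ℝ → ℝ)
    (hv : v = fun x =>
      (k - K) * (k / x) ^ κ * (((K / x) ^ (-(lam / σ)) - (K / x) ^ (lam / σ)) / D) +
        δ * (K / x) ^ κ * (((k / x) ^ (lam / σ) - (k / x) ^ (-(lam / σ))) / D))
    (hw : w = fun x => δ * (x / K) ^ (lam / σ - κ)) :
    derivWithin w (Set.Iic K) K = (lam / σ - κ) * δ / K ∧
    (derivWithin v (Set.Ioi K) K ≥ (lam / σ - κ) * δ / K ↔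
      δ ≤ (k - K) * (K / k) ^ (lam / σ - κ)) ∧
    (derivWithin v (Set.Ioi K) K - derivWithin w (Set.Iic K) K =
      (2 * (k - K) * (k / K) ^ (κ + lam / σ) * lam - 2 * (k / K) ^ (2 * lam / σ) * δ * lam) /
        ((-1 + (k / K) ^ (2 * lam / σ)) * K * σ)) ∧
    ((2 * (k - K) * (k / K) ^ (κ + lam / σ) * lam - 2 * (k / K) ^ (2 * lam / σ) * δ * lam) /
        ((-1 + (k / K) ^ (2 * lam / σ)) * K * σ) ≥ 0 ↔
      δ ≤ (k - K) * (K / k) ^ (lam / σ - κ)) := by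
  have hlam0 : 0 < lam := hlam ▸ sqrt_pos.mpr (by positivity)
  have hq : 1 < k / K := (one_lt_div hK).mpr hk
  subst hv hw
  have hw' : derivWithin (fun x => δ * (x / K) ^ (lam / σ - κ)) (Set.Iic K) K =
      (lam / σ - κ) * δ / K :=
    (hasDerivAt_const_mul_div_self_rpow δ _ hK.ne').hasDerivWithinAt.derivWithin
      (uniqueDiffOn_Iic K K Set.self_mem_Iic)
  have hv' := (hasDerivAt_strike_candidate (k - K) δ κ (lam / σ) D hK.ne'
    (hK.trans hk).ne').hasDerivWithinAt.derivWithin (uniqueDiffWithinAt_Ioi K)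
  have hjump := strike_jump_eq (k - K) δ κ lam σ (by positivity)
    (one_lt_rpow hq (by positivity)).ne'
  have hsign := strike_jump_nonneg_iff (k - K) δ κ lam σ hK hk hσ hlam0
  rw [hw', hv', hD]
  refine ⟨rfl, ?_, hjump, hsign⟩
  rw [ge_iff_le, ← sub_nonneg, hjump, ← ge_iff_le]
  exact hsign

/-- The right-hand derivative of the middle-region candidate `v` at the strike `K` is at least
the left-hand derivative `w′(K) = (λ/σ − κ)δ/K` of `w(x) = δ(x/K)^{λ/σ−κ}` if and only if
`δ ≤ (k* − K)(K/k*)^{λ/σ − κ}`; equivalently, the explicit derivative-jump expression is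
non-negative precisely under the same condition on `δ`. -/
theorem derivative_jump_at_strike (r d σ K δ : ℝ)
    (hr : 0 < r) (hd : 0 ≤ d) (hσ : 0 < σ) (hK : 0 < K) (hδ : 0 < δ)
    (lam κ : ℝ)
    (hlam : lam = Real.sqrt (2 * r + ((r - d - σ ^ 2 / 2) / σ) ^ 2))
    (hκ : κ = (r - d - σ ^ 2 / 2) / σ ^ 2)
    (k : ℝ) (hk : K < k)
    (D : ℝ) (hD : D = (k / K) ^ (lam / σ) - (k / K) ^ (-(lam / σ)))
    (v w : ℝ → ℝ)
    (hv : v = fun x =>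
      (k - K) * (k / x) ^ κ * (((K / x) ^ (-(lam / σ)) - (K / x) ^ (lam / σ)) / D) +
        δ * (K / x) ^ κ * (((k / x) ^ (lam / σ) - (k / x) ^ (-(lam / σ))) / D))
    (hw : w = fun x => δ * (x / K) ^ (lam / σ - κ)) :
    derivWithin w (Set.Iic K) K = (lam / σ - κ) * δ / K ∧
    (derivWithin v (Set.Ioi K) K ≥ (lam / σ - κ) * δ / K ↔
      δ ≤ (k - K) * (K / k) ^ (lam / σ - κ)) ∧
    (derivWithin v (Set.Ioi K) K - derivWithin w (Set.Iic K) K =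
      (2 * (k - K) * (k / K) ^ (κ + lam / σ) * lam - 2 * (k / K) ^ (2 * lam / σ) * δ * lam) /
        ((-1 + (k / K) ^ (2 * lam / σ)) * K * σ)) ∧
    ((2 * (k - K) * (k / K) ^ (κ + lam / σ) * lam - 2 * (k / K) ^ (2 * lam / σ) * δ * lam) /
        ((-1 + (k / K) ^ (2 * lam / σ)) * K * σ) ≥ 0 ↔
      δ ≤ (k - K) * (K / k) ^ (lam / σ - κ)) :=
  derivative_jump_at_strike_general r d σ K δ hr hσ hK lam κ hlam k hk D hD v w hv hw
end
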